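/- arXiv:2312.08893 — 7 statements merged into one kernel-verified Lean document; each statement's English description precedes it below -/
import Mathlib

section
/- Let λ = (λ₁, …, λ_n) ∈ ℝⁿ with λ₁ ≥ λ₂ ≥ … ≥ λ_n ≥ 0, and let τ, j be positive integers with τ ≥ j. Then (τ + 1 − j) · σ_{τ+1}(λ) ≤ σ_τ(λ) · Σ_{i=j+1}^{n} λ_i; equivalently, when σ_τ(λ) > 0, the ratio σ_{τ+1}(λ)/σ_τ(λ) is at most (1/(τ+1−j)) · Σ_{i=j+1}^{n} λ_i. -/
/-!
Every `(k+1)`-subset `S` has at least `k + 1 - m` elements in `A` once `#Aᶜ ≤ m`, so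
`(k + 1 - m) σ_{k+1}` is at most the sum of `∏_S f` over the pairs `(S, i)` with `i ∈ S ∩ A`.
Removing `i` from `S` turns these pairs bijectively into the pairs `(T, i)` with `#T = k` and
`i ∈ A \ T`, weighted by `(∏_T f) f i`; dropping the constraint `i ∉ T` only adds nonnegative
terms, and what is left is `σ_k · ∑_{i ∈ A} f i`.
-/

open Finset

variable {ι R : Type*} [DecidableEq ι] [Fintype ι]

lemma card_sub_le_card_inter_of_card_compl_le {A : Finset ι} {m : ℕ} (hA : #Aᶜ ≤ m)
    (S : Finset ι) : #S - m ≤ #(S ∩ A) := by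
  have hsdiff : #(S \ A) ≤ #Aᶜ :=
    card_le_card fun x hx => mem_compl.2 (mem_sdiff.1 hx).2
  have := card_sdiff_add_card_inter S A
  omega

lemma sum_powersetCard_succ_sum_inter_prod [CommSemiring R] (f : ι → R) (A : Finset ι) (k : ℕ) :
    ∑ S ∈ powersetCard (k + 1) univ, ∑ _i ∈ S ∩ A, ∏ l ∈ S, f l
      = ∑ T ∈ powersetCard k univ, ∑ i ∈ A \ T, (∏ l ∈ T, f l) * f i := by
  rw [sum_sigma', sum_sigma']
  refine sum_nbij' (fun x => ⟨x.1.erase x.2, x.2⟩) (fun x => ⟨insert x.2 x.1, x.2⟩)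
    ?_ ?_ ?_ ?_ ?_
  · rintro ⟨S, i⟩ hx
    simp only [mem_sigma, mem_powersetCard_univ, mem_inter] at hx ⊢
    obtain ⟨hS, hiS, hiA⟩ := hx
    exact ⟨by rw [card_erase_of_mem hiS, hS]; rfl, mem_sdiff.2 ⟨hiA, notMem_erase i S⟩⟩
  · rintro ⟨T, i⟩ hx
    simp only [mem_sigma, mem_powersetCard_univ, mem_sdiff] at hx ⊢
    obtain ⟨hT, hiA, hiT⟩ := hx
    exact ⟨by rw [card_insert_of_notMem hiT, hT], mem_inter.2 ⟨mem_insert_self i T, hiA⟩⟩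
  · rintro ⟨S, i⟩ hx
    simp only [mem_sigma, mem_inter] at hx
    simp [insert_erase hx.2.1]
  · rintro ⟨T, i⟩ hx
    simp only [mem_sigma, mem_sdiff] at hx
    simp [erase_insert hx.2.2]
  · rintro ⟨S, i⟩ hx
    simp only [mem_sigma, mem_inter] at hx
    exact (prod_erase_mul S f hx.2.1).symm

lemma natCast_sub_mul_sum_powersetCard_succ_le [CommSemiring R] [PartialOrder R]
    [IsOrderedRing R] {f : ι → R} (hf : ∀ i, 0 ≤ f i) {A : Finset ι} {m : ℕ} (hA : #Aᶜ ≤ m)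
    (k : ℕ) :
    ((k + 1 - m : ℕ) : R) * ∑ S ∈ powersetCard (k + 1) univ, ∏ i ∈ S, f i
      ≤ (∑ T ∈ powersetCard k univ, ∏ i ∈ T, f i) * ∑ i ∈ A, f i := by
  have hprod : ∀ S : Finset ι, 0 ≤ ∏ i ∈ S, f i := fun S => prod_nonneg fun i _ => hf i
  calc ((k + 1 - m : ℕ) : R) * ∑ S ∈ powersetCard (k + 1) univ, ∏ i ∈ S, f i
      = ∑ S ∈ powersetCard (k + 1) univ, (k + 1 - m) • ∏ i ∈ S, f i := by
        simp only [mul_sum, nsmul_eq_mul]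
    _ ≤ ∑ S ∈ powersetCard (k + 1) univ, ∑ _i ∈ S ∩ A, ∏ l ∈ S, f l := by
        refine sum_le_sum fun S hS => ?_
        rw [sum_const]
        refine nsmul_le_nsmul_left (hprod S) ?_
        simpa only [mem_powersetCard_univ.1 hS] using card_sub_le_card_inter_of_card_compl_le hA S
    _ = ∑ T ∈ powersetCard k univ, ∑ i ∈ A \ T, (∏ l ∈ T, f l) * f i :=
        sum_powersetCard_succ_sum_inter_prod f A k
    _ ≤ ∑ T ∈ powersetCard k univ, ∑ i ∈ A, (∏ l ∈ T, f l) * f i :=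
        sum_le_sum fun T _ => sum_le_sum_of_subset_of_nonneg sdiff_subset
          fun i _ _ => mul_nonneg (hprod T) (hf i)
    _ = (∑ T ∈ powersetCard k univ, ∏ i ∈ T, f i) * ∑ i ∈ A, f i := by
        simp only [sum_mul, ← mul_sum]

theorem stmt3_general {n : ℕ} (lam : Fin n → ℝ)
    (hnonneg : ∀ i, 0 ≤ lam i)
    (τ j : ℕ) (hτj : j ≤ τ) :
    ((τ : ℝ) + 1 - j) *
        (∑ S ∈ Finset.powersetCard (τ + 1) (Finset.univ : Finset (Fin n)), ∏ i ∈ S, lam i)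
      ≤ (∑ S ∈ Finset.powersetCard τ (Finset.univ : Finset (Fin n)), ∏ i ∈ S, lam i) *
          ∑ i ∈ Finset.univ.filter (fun i : Fin n => j ≤ (i : ℕ)), lam i := by
  have hcompl : #(univ.filter fun i : Fin n => j ≤ (i : ℕ))ᶜ ≤ j := by
    simpa only [compl_filter, not_le, Fin.card_filter_val_lt] using min_le_right n j
  have hcoeff : ((τ : ℝ) + 1 - j) = ((τ + 1 - j : ℕ) : ℝ) := by
    rw [Nat.cast_sub (by omega), Nat.cast_succ]
  rw [hcoeff]
  exact natCast_sub_mul_sum_powersetCard_succ_le hnonneg hcompl τ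

/-- Lemma 3.1 of [GS12]: for a nonincreasing nonnegative vector
`λ : Fin n → ℝ` and positive integers `τ ≥ j`, we have
`(τ + 1 − j) · σ_{τ+1}(λ) ≤ σ_τ(λ) · Σ_{i=j+1}^{n} λ_i`,
where `σ_ℓ(λ) = Σ_{S ⊆ [n], |S| = ℓ} Π_{i ∈ S} λ_i` is the elementary symmetric polynomial,
indices are 1-based (so `i : Fin n` has 1-based index `i+1`, and the sum
`Σ_{i=j+1}^n λ_i` runs over those `i : Fin n` with `j ≤ i.val`). -/
theorem stmt3 {n : ℕ} (lam : Fin n → ℝ)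
    (hmono : ∀ i j : Fin n, i ≤ j → lam j ≤ lam i)
    (hnonneg : ∀ i, 0 ≤ lam i)
    (τ j : ℕ) (hj : 1 ≤ j) (hτj : j ≤ τ) :
    ((τ : ℝ) + 1 - j) *
        (∑ S ∈ Finset.powersetCard (τ + 1) (Finset.univ : Finset (Fin n)), ∏ i ∈ S, lam i)
      ≤ (∑ S ∈ Finset.powersetCard τ (Finset.univ : Finset (Fin n)), ∏ i ∈ S, lam i) *
          ∑ i ∈ Finset.univ.filter (fun i : Fin n => j ≤ (i : ℕ)), lam i :=
  stmt3_general lam hnonneg τ j hτj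
end

section
/- Let λ = (λ₁, …, λ_m) ∈ ℝ^m with λ₁ ≥ λ₂ ≥ … ≥ λ_m ≥ 0, and let k, k' be integers with 1 ≤ k < k' ≤ m. Then for every index i ∈ {1,…,m}: (k' − k) · σ_{k'}(λ) ≤ σ_{k'−1}(λ_{−i}) · ((k'−k)·λ_i + Σ_{j>k, j≠i} λ_j); equivalently, when σ_{k'}(λ) > 0, σ_{k'−1}(λ_{−i}) / σ_{k'}(λ) ≥ 1 / (λ_i + (1/(k'−k)) · Σ_{j>k, j≠i} λ_j). -/
/-!
Split the `k'`-subsets according to whether they contain `i`: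
`σ_{k'}(λ) = λ_i σ_{k'-1}(λ_{-i}) + σ_{k'}(λ_{-i})`, so it remains to show
`(k'-k) σ_{k'}(λ_{-i}) ≤ σ_{k'-1}(λ_{-i}) Σ_{j>k, j≠i} λ_j`.
A `k'`-subset `S` has at least `k'-k` elements `j > k`, so `(k'-k) Π_S λ` is at most the sum of
`λ_j Π_{S∖j} λ` over those `j`. Summing over `S` and regrouping by `j` gives
`Σ_{j>k, j≠i} λ_j σ_{k'-1}(λ_{-i,-j})`, and `σ_{k'-1}(λ_{-i,-j}) ≤ σ_{k'-1}(λ_{-i})` since `λ ≥ 0`.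
-/

open Finset

variable {ι R : Type*}

def esymmOn [CommSemiring R] (s : Finset ι) (f : ι → R) (n : ℕ) : R :=
  ∑ t ∈ s.powersetCard n, ∏ j ∈ t, f j

section CommSemiring

variable [CommSemiring R] [DecidableEq ι] {s : Finset ι} {f : ι → R}

theorem esymmOn_insert {a : ι} (ha : a ∉ s) (n : ℕ) :
    esymmOn (insert a s) f (n + 1) = f a * esymmOn s f n + esymmOn s f (n + 1) := by
  have hdisj : Disjoint (s.powersetCard (n + 1)) ((s.powersetCard n).image (insert a)) := by
    simp only [disjoint_right, mem_image, mem_powersetCard]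
    rintro _ ⟨t, ⟨hts, -⟩, rfl⟩ ⟨hs, -⟩
    exact ha (hs (mem_insert_self a t))
  have hinj : Set.InjOn (insert a) (s.powersetCard n : Set (Finset ι)) := fun t ht u hu h => by
    simp only [mem_coe, mem_powersetCard] at ht hu
    rw [← erase_insert (fun h => ha (ht.1 h)), h, erase_insert (fun h => ha (hu.1 h))]
  rw [esymmOn, powersetCard_succ_insert ha, sum_union hdisj, sum_image hinj, add_comm, esymmOn,
    esymmOn, mul_sum]
  congr 1
  refine sum_congr rfl fun t ht => prod_insert fun h => ha ?_
  exact (mem_powersetCard.mp ht).1 h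

theorem sum_powersetCard_filter_mem_prod {a : ι} (ha : a ∈ s) (n : ℕ) :
    ∑ t ∈ s.powersetCard (n + 1) with a ∈ t, ∏ j ∈ t, f j = f a * esymmOn (s.erase a) f n := by
  have notMem {t : Finset ι} (ht : t ⊆ s.erase a) : a ∉ t := fun h => notMem_erase a s (ht h)
  rw [esymmOn, mul_sum]
  symm
  refine sum_nbij' (insert a) (erase · a) ?_ ?_ ?_ ?_ ?_ <;>
    simp only [mem_powersetCard, mem_filter, and_imp]
  · rintro t hts rfl
    exact ⟨⟨insert_subset ha (hts.trans (erase_subset a s)), card_insert_of_notMem (notMem hts)⟩,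
      mem_insert_self a t⟩
  · rintro t hts hcard hat
    exact ⟨erase_subset_erase a hts, by rw [card_erase_of_mem hat, hcard, Nat.add_sub_cancel]⟩
  · exact fun t hts _ => erase_insert (notMem hts)
  · exact fun t _ _ hat => insert_erase hat
  · exact fun t hts _ => (prod_insert (notMem hts)).symm

theorem sum_powersetCard_sum_filter_prod (p : ι → Prop) [DecidablePred p] (n : ℕ) :
    ∑ t ∈ s.powersetCard (n + 1), ∑ j ∈ t with p j, ∏ x ∈ t, f x
      = ∑ j ∈ s with p j, f j * esymmOn (s.erase j) f n := by
  calc _ = ∑ j ∈ s with p j, ∑ t ∈ s.powersetCard (n + 1) with j ∈ t, ∏ x ∈ t, f x := by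
        refine sum_comm' fun t j => ?_
        simp only [mem_filter, mem_powersetCard]
        constructor
        · rintro ⟨⟨hts, hcard⟩, hjt, hj⟩
          exact ⟨⟨⟨hts, hcard⟩, hjt⟩, hts hjt, hj⟩
        · rintro ⟨⟨⟨hts, hcard⟩, hjt⟩, -, hj⟩
          exact ⟨⟨hts, hcard⟩, hjt, hj⟩
    _ = _ := sum_congr rfl fun j hj => sum_powersetCard_filter_mem_prod (mem_filter.mp hj).1 n

end CommSemiring

section OrderedSemiring

variable [CommSemiring R] [PartialOrder R] [IsOrderedRing R] {s t : Finset ι} {f : ι → R}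

theorem esymmOn_mono (hst : s ⊆ t) (hf : ∀ x ∈ t, 0 ≤ f x) (n : ℕ) :
    esymmOn s f n ≤ esymmOn t f n :=
  sum_le_sum_of_subset_of_nonneg (powersetCard_mono hst) fun _ hu _ =>
    prod_nonneg fun x hx => hf x ((mem_powersetCard.mp hu).1 hx)

theorem natCast_mul_esymmOn_succ_le [DecidableEq ι] {c : ℕ} (hf : ∀ x ∈ s, 0 ≤ f x)
    (p : ι → Prop) [DecidablePred p] (n : ℕ)
    (hc : ∀ t ∈ s.powersetCard (n + 1), c ≤ #{j ∈ t | p j}) :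
    c * esymmOn s f (n + 1) ≤ (∑ j ∈ s with p j, f j) * esymmOn s f n := by
  calc (c : R) * esymmOn s f (n + 1)
      ≤ ∑ t ∈ s.powersetCard (n + 1), ∑ j ∈ t with p j, ∏ x ∈ t, f x := by
        rw [esymmOn, mul_sum]
        refine sum_le_sum fun t ht => ?_
        rw [sum_const, nsmul_eq_mul]
        have hprod : 0 ≤ ∏ x ∈ t, f x :=
          prod_nonneg fun x hx => hf x ((mem_powersetCard.mp ht).1 hx)
        exact mul_le_mul_of_nonneg_right (Nat.mono_cast (hc t ht)) hprod
    _ = ∑ j ∈ s with p j, f j * esymmOn (s.erase j) f n := sum_powersetCard_sum_filter_prod p n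
    _ ≤ ∑ j ∈ s with p j, f j * esymmOn s f n := by
        refine sum_le_sum fun j hj => ?_
        exact mul_le_mul_of_nonneg_left (esymmOn_mono (erase_subset j s) hf n)
          (hf j (mem_filter.mp hj).1)
    _ = _ := (sum_mul ..).symm

end OrderedSemiring

theorem card_sub_le_card_filter_le_val {m : ℕ} (t : Finset (Fin m)) (k : ℕ) :
    #t - k ≤ #{j ∈ t | k ≤ j.val} := by
  have hsmall : #{j ∈ t | ¬k ≤ j.val} ≤ k := by
    simpa using card_le_card_of_injOn (t := range k) Fin.val
      (fun j hj => by simpa using (mem_filter.mp hj).2) Fin.val_injective.injOn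
  have := card_filter_add_card_filter_not (s := t) (fun j : Fin m => k ≤ j.val)
  omega

theorem stmt4_general {m : ℕ} (lam : Fin m → ℝ)
    (hnonneg : ∀ i, 0 ≤ lam i)
    (k k' : ℕ) (hkk' : k < k')
    (i : Fin m) :
    ((k' : ℝ) - k) *
        (∑ S ∈ Finset.powersetCard k' (Finset.univ : Finset (Fin m)), ∏ j ∈ S, lam j)
      ≤ (∑ S ∈ Finset.powersetCard (k' - 1) (Finset.univ.erase i), ∏ j ∈ S, lam j) *
          (((k' : ℝ) - k) * lam i
            + ∑ j ∈ Finset.univ.filter (fun j : Fin m => k ≤ (j : ℕ) ∧ j ≠ i), lam j) := by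
  obtain ⟨l, rfl⟩ : ∃ l, k' = l + 1 := ⟨k' - 1, by omega⟩
  set T := univ.erase i
  have hsplit : esymmOn univ lam (l + 1) = lam i * esymmOn T lam l + esymmOn T lam (l + 1) := by
    rw [← esymmOn_insert (notMem_erase i univ), insert_erase (mem_univ i)]
  have hfilter : ({j | k ≤ j.val ∧ j ≠ i} : Finset (Fin m)) = {j ∈ T | k ≤ j.val} := by
    ext j
    simp [T, and_comm]
  have hbound := natCast_mul_esymmOn_succ_le (c := l + 1 - k) (s := T) (fun x _ => hnonneg x)
    (fun j : Fin m => k ≤ j.val) l fun t ht => by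
      simpa [(mem_powersetCard.mp ht).2] using card_sub_le_card_filter_le_val t k
  rw [Nat.cast_sub hkk'.le] at hbound
  change _ * esymmOn univ lam (l + 1) ≤ esymmOn T lam (l + 1 - 1) * _
  rw [Nat.add_sub_cancel, hsplit, hfilter]
  linear_combination hbound

/-- for a nonincreasing nonnegative vector `λ : Fin m → ℝ` (1-based
indices: `i : Fin m` has 1-based index `i+1`), integers `1 ≤ k < k' ≤ m` and any index
`i`, we have
`(k'−k) · σ_{k'}(λ) ≤ σ_{k'−1}(λ_{−i}) · ((k'−k)·λ_i + Σ_{j>k, j≠i} λ_j)`.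
Here `σ_ℓ(λ) = Σ_{S, |S| = ℓ} Π_{j ∈ S} λ_j`, `λ_{−i}` is `λ` with the `i`-th entry
removed (modeled by summing over subsets of `univ.erase i`), and the last sum runs over
the 1-based indices `j ∈ {k+1,…,m}` with `j ≠ i` (i.e. `j : Fin m` with `k ≤ j.val`). -/
theorem stmt4 {m : ℕ} (lam : Fin m → ℝ)
    (hmono : ∀ i j : Fin m, i ≤ j → lam j ≤ lam i)
    (hnonneg : ∀ i, 0 ≤ lam i)
    (k k' : ℕ) (hk : 1 ≤ k) (hkk' : k < k') (hk'm : k' ≤ m)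
    (i : Fin m) :
    ((k' : ℝ) - k) *
        (∑ S ∈ Finset.powersetCard k' (Finset.univ : Finset (Fin m)), ∏ j ∈ S, lam j)
      ≤ (∑ S ∈ Finset.powersetCard (k' - 1) (Finset.univ.erase i), ∏ j ∈ S, lam j) *
          (((k' : ℝ) - k) * lam i
            + ∑ j ∈ Finset.univ.filter (fun j : Fin m => k ≤ (j : ℕ) ∧ j ≠ i), lam j) :=
  stmt4_general lam hnonneg k k' hkk' i
end

section
/- Let H and H̃ be real symmetric positive definite n×n matrices, and let 0 < ε < 1 be such that for all x ∈ ℝⁿ: (1/(1+ε)) · xᵀHx ≤ xᵀH̃x ≤ (1+ε) · xᵀHx. Then for every v ∈ ℝⁿ, the preconditioned gradient step satisfies ‖v − H̃⁻¹ H v‖_H² ≤ 2ε · ‖v‖_H², i.e., (v − H̃⁻¹Hv)ᵀ · H · (v − H̃⁻¹Hv) ≤ 2ε · vᵀHv. -/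
/-!
Put `w = H̃⁻¹Hv`, `q = vᵀHv` and `s = wᵀH̃w`. Since `H̃w = Hv`, the cross term `vᵀHw` equals `s`,
so `‖v - w‖²_H = q - 2s + wᵀHw ≤ q - (1 - ε)s`. Cauchy–Schwarz for the semi-inner product of `H̃`
gives `q² = (vᵀH̃w)² ≤ (vᵀH̃v)s ≤ (1 + ε)qs`, hence `q ≤ (1 + ε)s`, and therefore
`q - (1 - ε)s ≤ 2εq / (1 + ε) ≤ 2εq`.
-/

open Matrix

namespace Matrix

variable {ι R : Type*} [Fintype ι]

lemma IsSymm.dotProduct_mulVec_comm [CommSemiring R] {A : Matrix ι ι R} (hA : A.IsSymm)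
    (x y : ι → R) : x ⬝ᵥ (A *ᵥ y) = y ⬝ᵥ (A *ᵥ x) := by
  rw [dotProduct_mulVec, ← mulVec_transpose, hA.eq, dotProduct_comm]

lemma IsSymm.sub_dotProduct_mulVec_sub [CommRing R] {A : Matrix ι ι R} (hA : A.IsSymm)
    (x y : ι → R) :
    (x - y) ⬝ᵥ (A *ᵥ (x - y)) = x ⬝ᵥ (A *ᵥ x) - 2 * (x ⬝ᵥ (A *ᵥ y)) + y ⬝ᵥ (A *ᵥ y) := by
  rw [mulVec_sub, dotProduct_sub, sub_dotProduct, sub_dotProduct, hA.dotProduct_mulVec_comm y x]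
  ring

lemma PosSemidef.dotProduct_mulVec_sq_le {A : Matrix ι ι ℝ} (hA : A.PosSemidef) (x y : ι → ℝ) :
    (x ⬝ᵥ (A *ᵥ y)) ^ 2 ≤ (x ⬝ᵥ (A *ᵥ x)) * (y ⬝ᵥ (A *ᵥ y)) := by
  let _ := A.toSeminormedAddCommGroup hA
  let _ := A.toInnerProductSpace hA
  have h : (A *ᵥ y) ⬝ᵥ star x * ((A *ᵥ y) ⬝ᵥ star x)
      ≤ (A *ᵥ x) ⬝ᵥ star x * ((A *ᵥ y) ⬝ᵥ star y) :=
    real_inner_mul_inner_self_le x y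
  simpa only [star_trivial, dotProduct_comm _ x, dotProduct_comm _ y, sq] using h

theorem PosSemidef.sub_dotProduct_mulVec_sub_le {H Ht : Matrix ι ι ℝ} (hH : H.PosSemidef)
    (hHt : Ht.PosSemidef) {ε : ℝ} (hε0 : 0 ≤ ε) (hε1 : ε ≤ 1) {v w : ι → ℝ}
    (hw : Ht *ᵥ w = H *ᵥ v) (hwH : w ⬝ᵥ (H *ᵥ w) ≤ (1 + ε) * (w ⬝ᵥ (Ht *ᵥ w)))
    (hvHt : v ⬝ᵥ (Ht *ᵥ v) ≤ (1 + ε) * (v ⬝ᵥ (H *ᵥ v))) :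
    (v - w) ⬝ᵥ (H *ᵥ (v - w)) ≤ 2 * ε * (v ⬝ᵥ (H *ᵥ v)) := by
  have hHs : H.IsSymm := isHermitian_iff_isSymm.1 hH.isHermitian
  rw [hHs.sub_dotProduct_mulVec_sub]
  set q := v ⬝ᵥ (H *ᵥ v)
  set s := w ⬝ᵥ (Ht *ᵥ w)
  have hq : 0 ≤ q := hH.dotProduct_mulVec_nonneg v
  have hs : 0 ≤ s := hHt.dotProduct_mulVec_nonneg w
  have hcross : v ⬝ᵥ (H *ᵥ w) = s := by
    rw [hHs.dotProduct_mulVec_comm, ← hw]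
  have hqs : q ≤ (1 + ε) * s := by
    have hCS : q ^ 2 ≤ (v ⬝ᵥ (Ht *ᵥ v)) * s := by
      have hvw : v ⬝ᵥ (Ht *ᵥ w) = q := by rw [hw]
      exact hvw ▸ hHt.dotProduct_mulVec_sq_le v w
    rcases hq.eq_or_lt with hq0 | hqpos
    · rw [← hq0]
      positivity
    · refine le_of_mul_le_mul_left ?_ hqpos
      nlinarith [mul_le_mul_of_nonneg_right hvHt hs]
  -- `(1 + ε)((1 - ε)s - (1 - 2ε)q) = (1 - ε)((1 + ε)s - q) + 2ε²q`
  have hmain : (1 - 2 * ε) * q ≤ (1 - ε) * s := by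
    refine le_of_mul_le_mul_left ?_ (by linarith : (0 : ℝ) < 1 + ε)
    nlinarith [mul_nonneg (sub_nonneg.2 hε1) (sub_nonneg.2 hqs), mul_nonneg (sq_nonneg ε) hq]
  rw [hcross]
  linarith

end Matrix

/-- preconditioned gradient step: let `H` and `H̃` be real symmetric
positive definite `n × n` matrices and `0 < ε < 1` be such that
`(1/(1+ε))·xᵀHx ≤ xᵀH̃x ≤ (1+ε)·xᵀHx` for all `x`. Then for every `v`, the
preconditioned gradient step satisfies
`(v − H̃⁻¹Hv)ᵀ · H · (v − H̃⁻¹Hv) ≤ 2ε · vᵀHv`, i.e. `‖v − H̃⁻¹Hv‖_H² ≤ 2ε‖v‖_H²`. -/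
theorem stmt7 {n : ℕ} (H Ht : Matrix (Fin n) (Fin n) ℝ)
    (hH : H.PosDef) (hHt : Ht.PosDef)
    (ε : ℝ) (hε0 : 0 < ε) (hε1 : ε < 1)
    (happrox : ∀ x : Fin n → ℝ,
      (1 / (1 + ε)) * (x ⬝ᵥ (H *ᵥ x)) ≤ x ⬝ᵥ (Ht *ᵥ x) ∧
        x ⬝ᵥ (Ht *ᵥ x) ≤ (1 + ε) * (x ⬝ᵥ (H *ᵥ x)))
    (v : Fin n → ℝ) :
    (v - Ht⁻¹ *ᵥ (H *ᵥ v)) ⬝ᵥ (H *ᵥ (v - Ht⁻¹ *ᵥ (H *ᵥ v)))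
      ≤ 2 * ε * (v ⬝ᵥ (H *ᵥ v)) := by
  set w := Ht⁻¹ *ᵥ (H *ᵥ v)
  have hw : Ht *ᵥ w = H *ᵥ v := by
    rw [mulVec_mulVec, mul_nonsing_inv Ht hHt.det_pos.ne'.isUnit, one_mulVec]
  have hwH : w ⬝ᵥ (H *ᵥ w) ≤ (1 + ε) * (w ⬝ᵥ (Ht *ᵥ w)) := by
    have h := (happrox w).1
    rwa [one_div, inv_mul_le_iff₀ (by linarith)] at h
  exact hH.posSemidef.sub_dotProduct_mulVec_sub_le hHt.posSemidef hε0.le hε1.le hw hwH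
    (happrox v).2
end

section
/- Let B be a real m×m symmetric positive semidefinite matrix with operator norm ‖B‖₂ ≤ 1, and let d be a Rademacher vector uniform on {−1,1}^m. Then for every t ≥ 0: Pr{ dᵀBd ≥ (√(tr(B)) + t)² } ≤ e^{−t²/8}. (This follows because x ↦ √(xᵀBx) is convex and 1-Lipschitz with E[√(dᵀBd)] ≤ √(tr B).) -/
/-!
Write `f(d) = √(dᵀBd)`. Since `B` is positive semidefinite, `f` is a seminorm, hence convex,
and `f(d) (f(d) - f(d')) ≤ dᵀB(d - d')`. Flipping the sign `dᵢ` moves `d` by `2dᵢeᵢ`, so the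
one-sided discrete gradient satisfies `∑ᵢ (f(d) - f(dⁱ))₊² ≤ 4 ‖Bd‖² / dᵀBd ≤ 4`, the last step
because `B² ≤ B` when `0 ≤ B ≤ 1`.

The log-Sobolev inequality on the cube (the sharp two-point inequality, tensorised along the
coordinates) turns this gradient bound into `Ent(e^{λf}) ≤ λ² E e^{λf}`, and Herbst's argument
integrates it to `log E e^{λ(f - Ef)} ≤ λ²`. Chernoff's bound with `λ = t/2` gives
`Pr{f ≥ Ef + t} ≤ e^{-t²/4}`, and `Ef ≤ √(E dᵀBd) = √(tr B)` by Jensen.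
-/

open Matrix

/-- The Rademacher (`±1`) vector in `ℝ^m` determined by a sign pattern
`s : Fin m → Bool`. -/
def radVec {m : ℕ} (s : Fin m → Bool) : Fin m → ℝ :=
  fun i => if s i then 1 else -1

open Real Finset Filter Topology

theorem isMinOn_of_hasDerivAt_of_monotoneOn {D : Set ℝ} (hD : Convex ℝ D) (hDo : IsOpen D)
    {f f' : ℝ → ℝ} (hf : ∀ x ∈ D, HasDerivAt f (f' x) x) (hf' : MonotoneOn f' D)
    {b : ℝ} (hb : b ∈ D) (hb' : f' b = 0) : IsMinOn f D b := by
  have hconv : ConvexOn ℝ D f := by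
    refine MonotoneOn.convexOn_of_deriv hD (fun x hx => (hf x hx).continuousAt.continuousWithinAt)
      ?_ ?_ <;> rw [hDo.interior_eq]
    · exact fun x hx => (hf x hx).differentiableAt.differentiableWithinAt
    · intro x hx y hy hxy
      rw [(hf x hx).deriv, (hf y hy).deriv]
      exact hf' hx hy hxy
  intro a ha
  show f b ≤ f a
  rcases lt_trichotomy a b with hab | rfl | hba
  · have h := hconv.slope_le_of_hasDerivAt ha hb hab (hf b hb)
    rw [hb', slope_def_field, div_le_iff₀ (sub_pos.2 hab)] at h
    linarith
  · exact le_rfl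
  · have h := hconv.le_slope_of_hasDerivAt hb ha hba (hf b hb)
    rw [hb', slope_def_field, le_div_iff₀ (sub_pos.2 hba)] at h
    linarith

theorem sqrt_sum_sq_sub_sqrt_sum_sq_sq_le {ι : Type*} [Fintype ι] (u w : ι → ℝ) :
    (√(∑ i, u i ^ 2) - √(∑ i, w i ^ 2)) ^ 2 ≤ ∑ i, (u i - w i) ^ 2 := by
  have hnorm (v : ι → ℝ) : ‖WithLp.toLp 2 v‖ = √(∑ i, v i ^ 2) := by
    simp [EuclideanSpace.norm_eq]
  have h := abs_norm_sub_norm_le (WithLp.toLp 2 u) (WithLp.toLp 2 w)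
  rw [← WithLp.toLp_sub, hnorm, hnorm, hnorm] at h
  calc _ = |√(∑ i, u i ^ 2) - √(∑ i, w i ^ 2)| ^ 2 := (sq_abs _).symm
    _ ≤ √(∑ i, (u - w) i ^ 2) ^ 2 := pow_le_pow_left₀ (abs_nonneg _) h 2
    _ = ∑ i, (u i - w i) ^ 2 := by rw [sq_sqrt (by positivity)]; rfl

theorem mul_log_div_eq (x : ℝ) {c : ℝ} (hc : c ≠ 0) :
    x * log (x / c) = x * log x - x * log c := by
  rcases eq_or_ne x 0 with rfl | hx
  · simp
  · rw [log_div hx hc, mul_sub]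

theorem sq_exp_half_sub_exp_half_le (a b : ℝ) :
    (exp (a / 2) - exp (b / 2)) ^ 2
      ≤ (max (a - b) 0 ^ 2 * exp a + max (b - a) 0 ^ 2 * exp b) / 4 := by
  wlog hba : b ≤ a generalizing a b
  · have h := this b a (le_of_not_ge hba)
    linarith [show (exp (a / 2) - exp (b / 2)) ^ 2 = (exp (b / 2) - exp (a / 2)) ^ 2 by ring]
  have hlin : exp (a / 2) - exp (b / 2) ≤ (a / 2 - b / 2) * exp (a / 2) := by
    have h := add_one_le_exp (b / 2 - a / 2)
    rw [exp_sub] at h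
    have h' := mul_le_mul_of_nonneg_left h (exp_pos (a / 2)).le
    rw [mul_div_cancel₀ _ (exp_pos _).ne'] at h'
    linarith
  have hnonneg : 0 ≤ exp (a / 2) - exp (b / 2) := sub_nonneg.2 (exp_le_exp.2 (by linarith))
  rw [max_eq_left (sub_nonneg.2 hba), max_eq_right (sub_nonpos.2 hba)]
  calc _ ≤ ((a / 2 - b / 2) * exp (a / 2)) ^ 2 := pow_le_pow_left₀ hnonneg hlin 2
    _ = _ := by rw [mul_pow, sq (exp _), ← exp_add, add_halves]; ring

namespace Concentration

/-- `Fintype.card α` times the entropy of `g` under the uniform distribution on `α`. -/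
noncomputable def entropy {α : Type*} [Fintype α] (g : α → ℝ) : ℝ :=
  ∑ x, g x * log (g x) - (∑ x, g x) * log ((∑ x, g x) / Fintype.card α)

theorem entropy_comp_equiv {α β : Type*} [Fintype α] [Fintype β] (e : α ≃ β) (g : β → ℝ) :
    entropy (g ∘ e) = entropy g := by
  simp only [entropy, Function.comp_apply, e.sum_comp (fun x => g x * log (g x)), e.sum_comp,
    Fintype.card_congr e]

theorem entropy_prod {α β : Type*} [Fintype α] [Fintype β] [Nonempty α] [Nonempty β]
    (g : α × β → ℝ) :
    entropy g = ∑ a, entropy (fun b => g (a, b)) + entropy (fun a => ∑ b, g (a, b)) := by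
  have hα : (Fintype.card α : ℝ) ≠ 0 := by positivity
  have hβ : (Fintype.card β : ℝ) ≠ 0 := by positivity
  simp only [entropy, Fintype.sum_prod_type, mul_log_div_eq _ hα, mul_log_div_eq _ hβ,
    mul_log_div_eq _ (mul_ne_zero hα hβ), Fintype.card_prod, Nat.cast_mul, log_mul hα hβ,
    Finset.sum_sub_distrib, ← Finset.sum_mul]
  ring

theorem monotoneOn_sub_mul_log_sq (b : ℝ) :
    MonotoneOn (fun a => 2 * (a - b) - 2 * a * (log (a ^ 2) - log ((a ^ 2 + b ^ 2) / 2)))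
      (Set.Ioi 0) := by
  have hderiv : ∀ a ∈ Set.Ioi (0 : ℝ),
      HasDerivAt (fun a => 2 * (a - b) - 2 * a * (log (a ^ 2) - log ((a ^ 2 + b ^ 2) / 2)))
        (2 * (2 * a ^ 2 / (a ^ 2 + b ^ 2) - 1 - log (2 * a ^ 2 / (a ^ 2 + b ^ 2)))) a := by
    intro a (ha : 0 < a)
    have hsq := hasDerivAt_pow 2 a
    have := (((hasDerivAt_id a).sub_const b).const_mul 2).sub (((hasDerivAt_id a).const_mul 2).mul
      ((hsq.log (by positivity)).sub (((hsq.add_const (b ^ 2)).div_const 2).log (by positivity))))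
    refine this.congr_deriv ?_
    have hu : log (2 * a ^ 2 / (a ^ 2 + b ^ 2)) = log 2 + log (a ^ 2) - log (a ^ 2 + b ^ 2) := by
      rw [log_div (by positivity) (by positivity), log_mul two_ne_zero (by positivity)]
    simp only [id, Pi.sub_apply]
    rw [hu, log_div (by positivity) two_ne_zero]
    field_simp
    ring
  refine monotoneOn_of_hasDerivWithinAt_nonneg (convex_Ioi 0)
    (fun x hx => (hderiv x hx).continuousAt.continuousWithinAt)
    (fun x hx => (hderiv x (interior_subset hx)).hasDerivWithinAt) fun x hx => ?_
  have hx : (0 : ℝ) < x := interior_subset hx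
  linarith [log_le_sub_one_of_pos (show 0 < 2 * x ^ 2 / (x ^ 2 + b ^ 2) by positivity)]

theorem two_point_log_sobolev {a b : ℝ} (ha : 0 < a) (hb : 0 < b) :
    a ^ 2 * log (a ^ 2) + b ^ 2 * log (b ^ 2) - (a ^ 2 + b ^ 2) * log ((a ^ 2 + b ^ 2) / 2)
      ≤ (a - b) ^ 2 := by
  -- The gap `Φ` between the two sides is convex in `a`, and stationary and zero at `a = b`.
  set Φ : ℝ → ℝ := fun a => (a - b) ^ 2 - a ^ 2 * log (a ^ 2) - b ^ 2 * log (b ^ 2)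
    + (a ^ 2 + b ^ 2) * log ((a ^ 2 + b ^ 2) / 2)
  set Φ' : ℝ → ℝ := fun a => 2 * (a - b) - 2 * a * (log (a ^ 2) - log ((a ^ 2 + b ^ 2) / 2))
  have hΦ : ∀ a ∈ Set.Ioi (0 : ℝ), HasDerivAt Φ (Φ' a) a := by
    intro a (ha : 0 < a)
    have hsq := hasDerivAt_pow 2 a
    have hlog := hsq.log (by positivity)
    have hlog' := ((hsq.add_const (b ^ 2)).div_const 2).log (by positivity)
    have := ((((hasDerivAt_id a).sub_const b).pow 2).sub (hsq.mul hlog)).sub_const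
      (b ^ 2 * log (b ^ 2)) |>.add ((hsq.add_const (b ^ 2)).mul hlog')
    refine this.congr_deriv ?_
    simp only [Φ', id]
    field_simp
    ring
  have hbb : (b ^ 2 + b ^ 2) / 2 = b ^ 2 := by ring
  have hΦ'b : Φ' b = 0 := by
    simp only [Φ', hbb]
    ring
  have h := isMinOn_of_hasDerivAt_of_monotoneOn (convex_Ioi 0) isOpen_Ioi hΦ
    (monotoneOn_sub_mul_log_sq b) hb hΦ'b ha
  simp only [Set.mem_ofPred_eq, Φ, hbb] at h
  linarith

theorem entropy_bool_sq_le {h : Bool → ℝ} (hpos : ∀ b, 0 < h b) :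
    entropy (fun b => h b ^ 2) ≤ (h false - h true) ^ 2 := by
  have h2 := two_point_log_sobolev (hpos true) (hpos false)
  simp only [entropy, Fintype.sum_bool, Fintype.card_bool, Nat.cast_ofNat]
  linarith [show (h true - h false) ^ 2 = (h false - h true) ^ 2 by ring]

variable {α : Type*} [Fintype α] [Nonempty α]

theorem hasDerivAt_log_mean_exp (f : α → ℝ) (u : ℝ) :
    HasDerivAt (fun u => log ((∑ x, exp (u * f x)) / Fintype.card α))
      ((∑ x, exp (u * f x) * f x) / ∑ x, exp (u * f x)) u := by
  have hF : HasDerivAt (fun u => ∑ x, exp (u * f x)) (∑ x, exp (u * f x) * f x) u :=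
    HasDerivAt.fun_sum fun x _ => by simpa using ((hasDerivAt_id u).mul_const (f x)).exp
  have hpos : 0 < ∑ x, exp (u * f x) := sum_pos (fun x _ => exp_pos _) univ_nonempty
  refine ((hF.div_const _).log (by positivity)).congr_deriv ?_
  field_simp

theorem tendsto_log_mean_exp_div (f : α → ℝ) :
    Tendsto (fun u => log ((∑ x, exp (u * f x)) / Fintype.card α) / u) (𝓝[>] 0)
      (𝓝 ((∑ x, f x) / Fintype.card α)) := by
  have h := hasDerivAt_iff_tendsto_slope.mp (hasDerivAt_log_mean_exp f 0)
  simp only [zero_mul, exp_zero, one_mul, sum_const, card_univ, nsmul_eq_mul, mul_one] at h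
  refine (h.mono_left (nhdsWithin_mono 0 fun u (hu : 0 < u) => hu.ne')).congr' ?_
  filter_upwards with u
  simp [slope_def_field]

/-- Herbst's argument: `K u = log (E e^{u f}) / u - c u` is antitone on `(0, ∞)`, and tends to
`E f` as `u → 0⁺`. -/
theorem log_mean_exp_le (f : α → ℝ) {c : ℝ}
    (hent : ∀ u, 0 < u → entropy (fun x => exp (u * f x)) ≤ c * u ^ 2 * ∑ x, exp (u * f x))
    {l : ℝ} (hl : 0 ≤ l) :
    log ((∑ x, exp (l * f x)) / Fintype.card α)
      ≤ l * ((∑ x, f x) / Fintype.card α) + c * l ^ 2 := by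
  rcases hl.eq_or_lt with rfl | hl
  · simp
  set G : ℝ → ℝ := fun u => log ((∑ x, exp (u * f x)) / Fintype.card α)
  set K : ℝ → ℝ := fun u => G u / u - c * u
  have hK : ∀ u ∈ Set.Ioi (0 : ℝ), HasDerivAt K
      ((((∑ x, exp (u * f x) * f x) / ∑ x, exp (u * f x)) * u - G u * 1) / u ^ 2 - c * 1) u :=
    fun u hu => ((hasDerivAt_log_mean_exp f u).div (hasDerivAt_id u) (ne_of_gt hu)).sub
      ((hasDerivAt_id u).const_mul c)
  have hK' : ∀ u ∈ Set.Ioi (0 : ℝ),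
      (((∑ x, exp (u * f x) * f x) / ∑ x, exp (u * f x)) * u - G u * 1) / u ^ 2 - c * 1 ≤ 0 := by
    intro u (hu : 0 < u)
    have hF : 0 < ∑ x, exp (u * f x) := sum_pos (fun x _ => exp_pos _) univ_nonempty
    have h := hent u hu
    simp only [entropy, log_exp] at h
    rw [sub_nonpos, div_le_iff₀ (by positivity), div_mul_eq_mul_div, mul_one, sub_le_iff_le_add,
      div_le_iff₀ hF]
    simp only [G, mul_left_comm _ u, ← mul_sum] at h ⊢
    linarith
  have hanti : AntitoneOn K (Set.Ioi 0) :=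
    antitoneOn_of_hasDerivWithinAt_nonpos (convex_Ioi 0)
      (fun u hu => (hK u hu).continuousAt.continuousWithinAt)
      (fun u hu => (hK u (interior_subset hu)).hasDerivWithinAt)
      (fun u hu => hK' u (interior_subset hu))
  have hlim : Tendsto K (𝓝[>] 0) (𝓝 ((∑ x, f x) / Fintype.card α)) := by
    simpa using (tendsto_log_mean_exp_div f).sub
      ((tendsto_id.const_mul c).mono_left nhdsWithin_le_nhds)
  have hKl : K l ≤ (∑ x, f x) / Fintype.card α :=
    ge_of_tendsto hlim (by
      filter_upwards [Ioo_mem_nhdsGT hl] with u hu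
      exact hanti hu.1 hl hu.2.le)
  have := mul_le_mul_of_nonneg_right hKl hl.le
  simp only [K, sub_mul, div_mul_cancel₀ _ hl.ne'] at this
  linarith

theorem card_upper_tail_le_of_log_mean_exp_le (f : α → ℝ) {c t : ℝ} (hc : 0 < c)
    (hmgf : ∀ l, 0 ≤ l →
      log ((∑ x, exp (l * f x)) / Fintype.card α) ≤ l * ((∑ x, f x) / Fintype.card α) + c * l ^ 2)
    (ht : 0 ≤ t) :
    (#{x | (∑ x, f x) / Fintype.card α + t ≤ f x} : ℝ)
      ≤ exp (-t ^ 2 / (4 * c)) * Fintype.card α := by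
  set μ := (∑ x, f x) / Fintype.card α
  set l := t / (2 * c)
  have hl : 0 ≤ l := by positivity
  have hF : ∑ x, exp (l * f x) ≤ exp (-t ^ 2 / (4 * c)) * Fintype.card α * exp (l * (μ + t)) := by
    have h := hmgf l hl
    rw [log_le_iff_le_exp (by positivity), div_le_iff₀ (by positivity)] at h
    refine h.trans_eq ?_
    rw [mul_right_comm, ← exp_add]
    congr 2
    simp only [l]
    field_simp
    ring
  have hS : (#{x | μ + t ≤ f x} : ℝ) * exp (l * (μ + t)) ≤ ∑ x, exp (l * f x) :=
    calc (#{x | μ + t ≤ f x} : ℝ) * exp (l * (μ + t))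
        = ∑ x ∈ {x | μ + t ≤ f x}, exp (l * (μ + t)) := by rw [sum_const, nsmul_eq_mul]
      _ ≤ ∑ x ∈ {x | μ + t ≤ f x}, exp (l * f x) :=
          sum_le_sum fun x hx => exp_le_exp.2 (mul_le_mul_of_nonneg_left (mem_filter.1 hx).2 hl)
      _ ≤ ∑ x, exp (l * f x) :=
          sum_le_sum_of_subset_of_nonneg (filter_subset _ _) fun _ _ _ => (exp_pos _).le
  exact le_of_mul_le_mul_right (hS.trans hF) (exp_pos _)

end Concentration

namespace BooleanCube

open Concentration

variable {m : ℕ}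

def flipCoord (i : Fin m) (x : Fin m → Bool) : Fin m → Bool :=
  Function.update x i (!x i)

theorem flipCoord_involutive (i : Fin m) : Function.Involutive (flipCoord i) := by
  intro x
  simp [flipCoord]

theorem flipCoord_cons_zero (b : Bool) (y : Fin m → Bool) :
    flipCoord 0 (Fin.cons b y : Fin (m + 1) → Bool) = Fin.cons (!b) y := by
  rw [flipCoord, Fin.cons_zero, Fin.update_cons_zero]

theorem flipCoord_cons_succ (i : Fin m) (b : Bool) (y : Fin m → Bool) :
    flipCoord i.succ (Fin.cons b y : Fin (m + 1) → Bool) = Fin.cons b (flipCoord i y) := by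
  rw [flipCoord, Fin.cons_succ, ← Fin.cons_update, flipCoord]

theorem sum_cube_succ {M : Type*} [AddCommMonoid M] (F : (Fin (m + 1) → Bool) → M) :
    ∑ x, F x = ∑ b, ∑ y, F (Fin.cons b y) := by
  rw [← (Fin.consEquiv fun _ => Bool).sum_comp, Fintype.sum_prod_type]
  rfl

noncomputable def energy (h : (Fin m → Bool) → ℝ) : ℝ :=
  ∑ x, ∑ i, (h x - h (flipCoord i x)) ^ 2

theorem energy_succ (h : (Fin (m + 1) → Bool) → ℝ) :
    energy h = ∑ b, energy (fun y => h (Fin.cons b y))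
      + 2 * ∑ y, (h (Fin.cons false y) - h (Fin.cons true y)) ^ 2 := by
  have hsymm (y : Fin m → Bool) : (h (Fin.cons true y) - h (Fin.cons false y)) ^ 2
      = (h (Fin.cons false y) - h (Fin.cons true y)) ^ 2 := by ring
  simp only [energy, sum_cube_succ, Fin.sum_univ_succ, flipCoord_cons_zero, flipCoord_cons_succ,
    Finset.sum_add_distrib, Fintype.sum_bool, Bool.not_true, Bool.not_false, hsymm]
  ring

theorem log_sobolev (h : (Fin m → Bool) → ℝ) (hpos : ∀ x, 0 < h x) :
    entropy (fun x => h x ^ 2) ≤ energy h / 2 := by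
  induction m with
  | zero => simp [entropy, energy]
  | succ m ih =>
    set H : Bool → ℝ := fun b => √(∑ y, h (Fin.cons b y) ^ 2)
    have hHsq (b : Bool) : H b ^ 2 = ∑ y, h (Fin.cons b y) ^ 2 := sq_sqrt (by positivity)
    have hH (b : Bool) : 0 < H b :=
      sqrt_pos.2 (Finset.sum_pos (fun y _ => pow_pos (hpos _) 2) univ_nonempty)
    calc entropy (fun x => h x ^ 2)
        = ∑ b, entropy (fun y => h (Fin.cons b y) ^ 2) + entropy (fun b => H b ^ 2) := by
          rw [← entropy_comp_equiv (Fin.consEquiv fun _ => Bool), entropy_prod]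
          simp only [hHsq]
          rfl
      _ ≤ ∑ b, energy (fun y => h (Fin.cons b y)) / 2 + (H false - H true) ^ 2 :=
          add_le_add (sum_le_sum fun b _ => ih _ fun y => hpos _) (entropy_bool_sq_le hH)
      _ ≤ ∑ b, energy (fun y => h (Fin.cons b y)) / 2
            + ∑ y, (h (Fin.cons false y) - h (Fin.cons true y)) ^ 2 := by
          gcongr
          exact sqrt_sum_sq_sub_sqrt_sum_sq_sq_le _ _
      _ = energy h / 2 := by
          rw [energy_succ, ← Finset.sum_div]
          ring

section GradientBound

variable (f : (Fin m → Bool) → ℝ) {v : ℝ} (hf : ∀ x, ∑ i, max (f x - f (flipCoord i x)) 0 ^ 2 ≤ v)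
include hf

theorem energy_exp_le {l : ℝ} (hl : 0 ≤ l) :
    energy (fun x => exp (l * f x / 2)) ≤ l ^ 2 * v / 2 * ∑ x, exp (l * f x) := by
  set T : (Fin m → Bool) → Fin m → ℝ :=
    fun x i => exp (l * f x) * max (f x - f (flipCoord i x)) 0 ^ 2
  have hmax (d : ℝ) : max (l * d) 0 ^ 2 = l ^ 2 * max d 0 ^ 2 := by
    rw [← mul_pow, mul_max_of_nonneg _ _ hl, mul_zero]
  have hterm (x : Fin m → Bool) (i : Fin m) :
      (exp (l * f x / 2) - exp (l * f (flipCoord i x) / 2)) ^ 2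
        ≤ l ^ 2 / 4 * (T x i + T (flipCoord i x) i) := by
    have h := sq_exp_half_sub_exp_half_le (l * f x) (l * f (flipCoord i x))
    simp only [← mul_sub, hmax] at h
    simp only [T, flipCoord_involutive i x]
    linarith
  -- Reindexing by the involution `flipCoord i` turns the second half of each term into the first.
  have hswap : ∑ x, ∑ i, T (flipCoord i x) i = ∑ x, ∑ i, T x i := by
    rw [sum_comm, sum_comm (f := T)]
    exact sum_congr rfl fun i _ => Equiv.sum_comp (flipCoord_involutive i).toPerm (T · i)
  calc energy (fun x => exp (l * f x / 2))
      ≤ ∑ x, ∑ i, l ^ 2 / 4 * (T x i + T (flipCoord i x) i) :=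
        sum_le_sum fun x _ => sum_le_sum fun i _ => hterm x i
    _ = l ^ 2 / 2 * ∑ x, exp (l * f x) * ∑ i, max (f x - f (flipCoord i x)) 0 ^ 2 := by
        simp only [← mul_sum, sum_add_distrib, hswap, T]
        ring
    _ ≤ l ^ 2 / 2 * ∑ x, exp (l * f x) * v := by
        gcongr with x
        exact hf x
    _ = l ^ 2 * v / 2 * ∑ x, exp (l * f x) := by
        rw [← sum_mul]
        ring

theorem entropy_exp_le {l : ℝ} (hl : 0 ≤ l) :
    entropy (fun x => exp (l * f x)) ≤ l ^ 2 * v / 4 * ∑ x, exp (l * f x) := by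
  have h := log_sobolev (fun x => exp (l * f x / 2)) fun x => exp_pos _
  have hsq (y : ℝ) : exp (y / 2) ^ 2 = exp y := by rw [sq, ← exp_add, add_halves]
  simp only [hsq] at h
  linarith [energy_exp_le f hf hl]

theorem card_upper_tail_le {t : ℝ} (hv : 0 < v) (ht : 0 ≤ t) :
    (#{x | (∑ x, f x) / 2 ^ m + t ≤ f x} : ℝ) ≤ exp (-t ^ 2 / v) * 2 ^ m := by
  have h := card_upper_tail_le_of_log_mean_exp_le f (c := v / 4) (by positivity)
    (fun l hl => log_mean_exp_le f (fun u hu => (entropy_exp_le f hf hu.le).trans_eq (by ring)) hl)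
    ht
  have hcard : (Fintype.card (Fin m → Bool) : ℝ) = 2 ^ m := by simp
  rwa [hcard, show 4 * (v / 4) = v by ring] at h

end GradientBound

end BooleanCube

namespace Matrix

variable {n : Type*} [Fintype n] {B : Matrix n n ℝ}

theorem IsHermitian.dotProduct_mulVec_comm (hB : B.IsHermitian) (x y : n → ℝ) :
    x ⬝ᵥ (B *ᵥ y) = y ⬝ᵥ (B *ᵥ x) := by
  rw [dotProduct_mulVec, ← mulVec_transpose, ← conjTranspose_eq_transpose_of_trivial, hB.eq,
    dotProduct_comm]

theorem PosSemidef.dotProduct_mulVec_self_nonneg (hB : B.PosSemidef) (x : n → ℝ) :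
    0 ≤ x ⬝ᵥ (B *ᵥ x) := by
  simpa using hB.dotProduct_mulVec_nonneg x

theorem PosSemidef.sq_dotProduct_mulVec_le (hB : B.PosSemidef) (x y : n → ℝ) :
    (x ⬝ᵥ (B *ᵥ y)) ^ 2 ≤ (x ⬝ᵥ (B *ᵥ x)) * (y ⬝ᵥ (B *ᵥ y)) := by
  classical
  have h := LinearMap.BilinForm.apply_mul_apply_le_of_forall_zero_le (toBilin' B)
    (fun z => by simpa [toBilin'_apply'] using hB.dotProduct_mulVec_self_nonneg z) x y
  simp only [toBilin'_apply'] at h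
  rwa [hB.isHermitian.dotProduct_mulVec_comm y x, ← sq] at h

theorem PosSemidef.sqrt_mul_sub_sqrt_le (hB : B.PosSemidef) (x y : n → ℝ) :
    √(x ⬝ᵥ (B *ᵥ x)) * (√(x ⬝ᵥ (B *ᵥ x)) - √(y ⬝ᵥ (B *ᵥ y))) ≤ x ⬝ᵥ (B *ᵥ (x - y)) := by
  have hx := hB.dotProduct_mulVec_self_nonneg x
  have hxy : x ⬝ᵥ (B *ᵥ y) ≤ √(x ⬝ᵥ (B *ᵥ x)) * √(y ⬝ᵥ (B *ᵥ y)) := by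
    rw [← sqrt_mul hx]
    exact le_sqrt_of_sq_le (hB.sq_dotProduct_mulVec_le x y)
  rw [mul_sub, mul_self_sqrt hx, mulVec_sub, dotProduct_sub]
  linarith

theorem PosSemidef.mulVec_dotProduct_mulVec_le (hB : B.PosSemidef)
    (hle : ∀ x : n → ℝ, x ⬝ᵥ (B *ᵥ x) ≤ x ⬝ᵥ x) (x : n → ℝ) :
    (B *ᵥ x) ⬝ᵥ (B *ᵥ x) ≤ x ⬝ᵥ (B *ᵥ x) := by
  have hcs := hB.sq_dotProduct_mulVec_le x (B *ᵥ x)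
  rw [hB.isHermitian.dotProduct_mulVec_comm x] at hcs
  have hBx : 0 ≤ (B *ᵥ x) ⬝ᵥ (B *ᵥ x) := by simpa using dotProduct_star_self_nonneg (B *ᵥ x)
  nlinarith [hle (B *ᵥ x), hB.dotProduct_mulVec_self_nonneg x]

end Matrix

open BooleanCube

section

variable {m : ℕ}

theorem radVec_mul_self (s : Fin m → Bool) (i : Fin m) : radVec s i * radVec s i = 1 := by
  unfold radVec
  split_ifs <;> norm_num

theorem radVec_flipCoord (i : Fin m) (s : Fin m → Bool) :
    radVec (flipCoord i s) = radVec s - Pi.single i (2 * radVec s i) := by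
  ext j
  rcases eq_or_ne j i with rfl | hji
  · cases h : s j <;> simp [radVec, flipCoord, h] <;> norm_num
  · simp [radVec, flipCoord, hji]

theorem sum_radVec_mul_radVec (i j : Fin m) :
    ∑ s : Fin m → Bool, radVec s i * radVec s j = if i = j then 2 ^ m else 0 := by
  split_ifs with hij
  · simp [hij, radVec_mul_self]
  · have hflip (s : Fin m → Bool) :
        radVec (flipCoord i s) i * radVec (flipCoord i s) j = -(radVec s i * radVec s j) := by
      simp [radVec_flipCoord, Ne.symm hij]
      ring
    have h := Equiv.sum_comp (flipCoord_involutive i).toPerm fun s => radVec s i * radVec s j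
    simp only [Function.Involutive.coe_toPerm, hflip, sum_neg_distrib] at h
    linarith

theorem sum_radVec_dotProduct_mulVec (B : Matrix (Fin m) (Fin m) ℝ) :
    ∑ s : Fin m → Bool, radVec s ⬝ᵥ (B *ᵥ radVec s) = 2 ^ m * B.trace := by
  calc ∑ s : Fin m → Bool, radVec s ⬝ᵥ (B *ᵥ radVec s)
      = ∑ s : Fin m → Bool, ∑ i, ∑ j, B i j * (radVec s i * radVec s j) := by
        simp only [dotProduct, mulVec, mul_sum]
        exact sum_congr rfl fun s _ => sum_congr rfl fun i _ => sum_congr rfl fun j _ => by ring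
    _ = ∑ i, ∑ j, B i j * ∑ s : Fin m → Bool, radVec s i * radVec s j := by
        rw [sum_comm]
        refine sum_congr rfl fun i _ => ?_
        rw [sum_comm]
        simp only [mul_sum]
    _ = 2 ^ m * B.trace := by
        simp [sum_radVec_mul_radVec, trace, mul_sum, mul_comm]

theorem sum_sqrt_radVec_dotProduct_mulVec_le {B : Matrix (Fin m) (Fin m) ℝ} (hB : B.PosSemidef) :
    ∑ s : Fin m → Bool, √(radVec s ⬝ᵥ (B *ᵥ radVec s)) ≤ 2 ^ m * √B.trace := by
  have h := sum_mul_le_sqrt_mul_sqrt univ (fun _ => (1 : ℝ))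
    fun s : Fin m → Bool => √(radVec s ⬝ᵥ (B *ᵥ radVec s))
  simp only [one_mul, one_pow, sum_const, card_univ, Fintype.card_fun, Fintype.card_bool,
    Fintype.card_fin, nsmul_eq_mul, mul_one, sq_sqrt (hB.dotProduct_mulVec_self_nonneg _),
    sum_radVec_dotProduct_mulVec] at h
  rwa [sqrt_mul (by positivity), ← mul_assoc, Nat.cast_pow, Nat.cast_ofNat,
    mul_self_sqrt (by positivity)] at h

theorem sum_sq_max_sqrt_sub_le {B : Matrix (Fin m) (Fin m) ℝ} (hB : B.PosSemidef)
    (hle : ∀ x : Fin m → ℝ, x ⬝ᵥ (B *ᵥ x) ≤ x ⬝ᵥ x) (s : Fin m → Bool) :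
    ∑ i, max (√(radVec s ⬝ᵥ (B *ᵥ radVec s))
      - √(radVec (flipCoord i s) ⬝ᵥ (B *ᵥ radVec (flipCoord i s)))) 0 ^ 2 ≤ 4 := by
  set x := radVec s
  set r := √(x ⬝ᵥ (B *ᵥ x))
  set q : Fin m → ℝ := fun i => √(radVec (flipCoord i s) ⬝ᵥ (B *ᵥ radVec (flipCoord i s)))
  show ∑ i, max (r - q i) 0 ^ 2 ≤ 4
  obtain hr | hr := (show 0 ≤ r from sqrt_nonneg _).eq_or_lt
  · have hzero (i : Fin m) : max (r - q i) 0 = 0 :=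
      max_eq_right (by rw [← hr]; exact sub_nonpos.2 (sqrt_nonneg _))
    simp [hzero]
  -- Multiplying by `r` turns each term into the gradient inequality `r (r - √(yᵀBy)) ≤ xᵀB(x - y)`.
  have hterm (i : Fin m) : r ^ 2 * max (r - q i) 0 ^ 2 ≤ 4 * (B *ᵥ x) i ^ 2 := by
    have hdiff : x - radVec (flipCoord i s) = Pi.single i (2 * x i) := by
      rw [radVec_flipCoord, sub_sub_cancel]
    have h := hB.sqrt_mul_sub_sqrt_le x (radVec (flipCoord i s))
    rw [hdiff, hB.isHermitian.dotProduct_mulVec_comm x (Pi.single i _), single_dotProduct] at h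
    rw [← mul_pow, mul_max_of_nonneg _ _ hr.le, mul_zero]
    calc max (r * (r - q i)) 0 ^ 2 ≤ max (2 * x i * (B *ᵥ x) i) 0 ^ 2 := by gcongr
      _ ≤ (2 * x i * (B *ᵥ x) i) ^ 2 :=
          (pow_le_pow_left₀ (le_max_right _ _) (max_le (le_abs_self _) (abs_nonneg _)) 2).trans_eq
            (sq_abs _)
      _ = 4 * (B *ᵥ x) i ^ 2 := by linear_combination 4 * (B *ᵥ x) i ^ 2 * radVec_mul_self s i
  have hsum : r ^ 2 * ∑ i, max (r - q i) 0 ^ 2 ≤ r ^ 2 * 4 :=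
    calc _ ≤ ∑ i, 4 * (B *ᵥ x) i ^ 2 := by rw [mul_sum]; exact sum_le_sum fun i _ => hterm i
      _ = 4 * ((B *ᵥ x) ⬝ᵥ (B *ᵥ x)) := by simp only [dotProduct, mul_sum, sq]
      _ ≤ 4 * (x ⬝ᵥ (B *ᵥ x)) := by gcongr; exact hB.mulVec_dotProduct_mulVec_le hle x
      _ = r ^ 2 * 4 := by rw [sq_sqrt (hB.dotProduct_mulVec_self_nonneg x)]; ring
  exact le_of_mul_le_mul_left hsum (by positivity)

end

open Classical in
/-- `‖B‖₂ ≤ 1` is expressed as `xᵀBx ≤ xᵀx`, and the probability over `d` as the number of sign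
patterns `s` divided by `2^m`. -/
theorem stmt10 {m : ℕ} (B : Matrix (Fin m) (Fin m) ℝ) (hB : B.PosSemidef)
    (hnorm : ∀ x : Fin m → ℝ, x ⬝ᵥ (B *ᵥ x) ≤ x ⬝ᵥ x)
    (t : ℝ) (ht : 0 ≤ t) :
    ((Finset.univ.filter (fun s : Fin m → Bool =>
          (Real.sqrt B.trace + t) ^ 2 ≤ radVec s ⬝ᵥ (B *ᵥ radVec s))).card : ℝ)
      ≤ Real.exp (-(t ^ 2) / 8) * 2 ^ m := by
  set f : (Fin m → Bool) → ℝ := fun s => √(radVec s ⬝ᵥ (B *ᵥ radVec s))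
  have hmean : (∑ s, f s) / 2 ^ m ≤ √B.trace := by
    rw [div_le_iff₀ (by positivity)]
    linarith [sum_sqrt_radVec_dotProduct_mulVec_le hB]
  have hsub : univ.filter (fun s => (√B.trace + t) ^ 2 ≤ radVec s ⬝ᵥ (B *ᵥ radVec s))
      ⊆ ({s | (∑ s, f s) / 2 ^ m + t ≤ f s} : Finset _) := by
    intro s hs
    simp only [mem_filter, mem_univ, true_and] at hs ⊢
    show _ ≤ √(radVec s ⬝ᵥ (B *ᵥ radVec s))
    have := sqrt_le_sqrt hs
    rw [sqrt_sq (by positivity)] at this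
    linarith
  calc _ ≤ (#{s | (∑ s, f s) / 2 ^ m + t ≤ f s} : ℝ) := by exact_mod_cast card_le_card hsub
    _ ≤ exp (-t ^ 2 / 4) * 2 ^ m :=
        card_upper_tail_le f (sum_sq_max_sqrt_sub_le hB hnorm) four_pos ht
    _ ≤ exp (-(t ^ 2) / 8) * 2 ^ m :=
        mul_le_mul_of_nonneg_right (exp_le_exp.2 (by linarith [sq_nonneg t])) (by positivity)
end

section
/- Let X₁, …, X_n be independent geometric random variables with possibly different parameters p_i ∈ (0,1], i.e., Pr{X_i = j} = p_i·(1−p_i)^{j−1} for integers j ≥ 1. Let X := Σ_{i=1}^n X_i, μ := E[X] = Σ_{i=1}^n 1/p_i, and p_* := min_i p_i. Then for every λ ≥ 1: Pr{ X ≥ λμ } ≤ exp(−p_*·μ·(λ − 1 − ln λ)). -/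
open MeasureTheory ProbabilityTheory
open scoped ProbabilityTheory

/-!
Chernoff's method. At `t = -log (1 - u)` with `0 ≤ u < p_*`, a geometric variable of
parameter `p` has moment generating function `(1 - u/p)⁻¹`. The convex function
`x ↦ -log (1 - x)` lies below its chord on `[0, u/p_*]`, so
`-log (1 - u/p) ≤ (p_*/p) · (-log (1 - u/p_*))`, and the product over `i` is at most
`exp (p_* μ · (-log (1 - u/p_*)))`. Together with `t ≥ u` this gives
`Pr{X ≥ a} ≤ exp (-u a + p_* μ · (-log (1 - u/p_*)))`; the choice `u = p_* (1 - 1/λ)`,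
for which `1 - u/p_* = 1/λ`, and `a = λμ` yield the bound.
-/

lemma mul_log_one_sub_div_le_log_one_sub_div {u q p : ℝ} (hq : 0 < q) (hqp : q ≤ p)
    (huq : u < q) : q / p * Real.log (1 - u / q) ≤ Real.log (1 - u / p) := by
  have hp : 0 < p := hq.trans_le hqp
  have hw : 0 ≤ q / p := by positivity
  have hw' : 0 ≤ 1 - q / p := by rw [sub_nonneg, div_le_one hp]; exact hqp
  have hmem : 1 - u / q ∈ Set.Ioi (0 : ℝ) := by
    rw [Set.mem_Ioi, sub_pos, div_lt_one hq]; exact huq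
  -- `1 - u/p` is the convex combination `(q/p) (1 - u/q) + (1 - q/p) 1`
  have h := strictConcaveOn_log_Ioi.concaveOn.2 hmem (Set.mem_Ioi.2 one_pos) hw hw'
    (add_sub_cancel _ _)
  have harg : (q / p) • (1 - u / q) + (1 - q / p) • (1 : ℝ) = 1 - u / p := by
    rw [smul_eq_mul, smul_eq_mul, mul_one]; field_simp; ring
  rwa [harg, Real.log_one, smul_zero, add_zero, smul_eq_mul] at h

lemma Measurable.hasSum_integral_comp_of_nat {Ω : Type*} [MeasurableSpace Ω] {μ : Measure Ω}
    [IsFiniteMeasure μ] {Y : Ω → ℕ} (hY : Measurable Y) {g : ℕ → ℝ}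
    (hg : Summable fun j => μ.real {ω | Y ω = j} * ‖g j‖) :
    Integrable (fun ω => g (Y ω)) μ ∧
      HasSum (fun j => μ.real {ω | Y ω = j} * g j) (∫ ω, g (Y ω) ∂μ) := by
  have hlaw : ∀ j, (μ.map Y {j}).toReal = μ.real {ω | Y ω = j} := fun j => by
    rw [Measure.map_apply hY (measurableSet_singleton j)]; rfl
  have hg' : Summable fun j => (μ.map Y {j}).toReal * ‖g j‖ := hg.congr fun j => by rw [hlaw]
  have hint : Integrable g (μ.map Y) := by
    rw [← Measure.sum_smul_dirac (μ.map Y)]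
    exact integrable_sum_dirac (fun j => measure_ne_top _ _) hg'
  refine ⟨hint.comp_measurable hY, ?_⟩
  rw [← integral_map hY.aemeasurable hint.aestronglyMeasurable,
    ← Measure.sum_smul_dirac (μ.map Y)]
  simpa only [hlaw, smul_eq_mul] using
    hasSum_integral_sum_dirac (fun j => measure_ne_top _ _) hg'

lemma mgf_geometric {Ω : Type*} [MeasurableSpace Ω] {μ : Measure Ω} [IsFiniteMeasure μ]
    {Y : Ω → ℕ} (hY : Measurable Y) {p t : ℝ} (hp1 : p ≤ 1)
    (hpos : ∀ᵐ ω ∂μ, 1 ≤ Y ω)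
    (hlaw : ∀ j : ℕ, 1 ≤ j → μ.real {ω | Y ω = j} = p * (1 - p) ^ (j - 1))
    (ht : (1 - p) * Real.exp t < 1) :
    Integrable (fun ω => Real.exp (t * Y ω)) μ ∧
      mgf (fun ω => (Y ω : ℝ)) μ t = p * Real.exp t / (1 - (1 - p) * Real.exp t) := by
  set r := (1 - p) * Real.exp t
  have hr0 : 0 ≤ r := mul_nonneg (sub_nonneg.2 hp1) (Real.exp_pos t).le
  have hzero : μ.real {ω | Y ω = 0} = 0 := by
    have : μ {ω | Y ω = 0} = 0 :=
      measure_mono_null (fun ω (h : Y ω = 0) => by simp [h]) (ae_iff.1 hpos)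
    simp [Measure.real, this]
  have hsucc : ∀ k : ℕ, μ.real {ω | Y ω = k + 1} * Real.exp (t * (k + 1)) =
      p * Real.exp t * r ^ k := fun k => by
    rw [hlaw (k + 1) (Nat.le_add_left 1 k), Nat.add_sub_cancel, mul_add_one, Real.exp_add,
      mul_comm t, Real.exp_nat_mul, mul_pow]
    ring
  have hsum : HasSum (fun j : ℕ => μ.real {ω | Y ω = j} * Real.exp (t * j))
      (p * Real.exp t / (1 - r)) := by
    rw [← hasSum_nat_add_iff' 1]
    simpa [hzero, hsucc, div_eq_mul_inv] using
      (hasSum_geometric_of_lt_one hr0 ht).mul_left (p * Real.exp t)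
  have hnorm : Summable fun j : ℕ => μ.real {ω | Y ω = j} * ‖Real.exp (t * j)‖ := by
    simpa only [Real.norm_eq_abs, Real.abs_exp] using hsum.summable
  obtain ⟨hint, hint_sum⟩ := hY.hasSum_integral_comp_of_nat hnorm
  exact ⟨hint, hint_sum.unique hsum⟩

lemma mgf_geometric_neg_log_one_sub {Ω : Type*} [MeasurableSpace Ω] {μ : Measure Ω}
    [IsFiniteMeasure μ] {Y : Ω → ℕ} (hY : Measurable Y) {p u : ℝ} (hp0 : 0 < p)
    (hp1 : p ≤ 1) (hpos : ∀ᵐ ω ∂μ, 1 ≤ Y ω)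
    (hlaw : ∀ j : ℕ, 1 ≤ j → μ.real {ω | Y ω = j} = p * (1 - p) ^ (j - 1)) (hup : u < p) :
    Integrable (fun ω => Real.exp (-Real.log (1 - u) * Y ω)) μ ∧
      mgf (fun ω => (Y ω : ℝ)) μ (-Real.log (1 - u)) = (1 - u / p)⁻¹ := by
  have hu1 : 0 < 1 - u := by linarith
  have hexp : Real.exp (-Real.log (1 - u)) = (1 - u)⁻¹ := by
    rw [Real.exp_neg, Real.exp_log hu1]
  have ht : (1 - p) * Real.exp (-Real.log (1 - u)) < 1 := by
    rw [hexp, ← div_eq_mul_inv, div_lt_one hu1]; linarith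
  obtain ⟨hint, hmgf⟩ := mgf_geometric hY hp1 hpos hlaw ht
  refine ⟨hint, ?_⟩
  have hden : 1 - (1 - p) * (1 - u)⁻¹ = (p - u) / (1 - u) := by field_simp; ring
  rw [hmgf, hexp, hden, ← div_eq_mul_inv, div_div_div_cancel_right₀ hu1.ne',
    one_sub_div hp0.ne', inv_div]

lemma measure_sum_ge_le_exp_mul_prod_mgf {Ω ι : Type*} [MeasurableSpace Ω] {μ : Measure Ω}
    [Fintype ι] {Y : ι → Ω → ℝ} (hindep : iIndepFun Y μ) (hY : ∀ i, Measurable (Y i))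
    {t : ℝ} (ht : 0 ≤ t) (hint : ∀ i, Integrable (fun ω => Real.exp (t * Y i ω)) μ)
    (a : ℝ) :
    μ.real {ω | a ≤ ∑ i, Y i ω} ≤ Real.exp (-t * a) * ∏ i, mgf (Y i) μ t := by
  have := hindep.isProbabilityMeasure
  rw [← hindep.mgf_sum hY]
  simpa only [Finset.sum_apply] using measure_ge_le_exp_mul_mgf a ht
    (hindep.integrable_exp_mul_sum hY fun i _ => hint i)

lemma measure_sum_ge_le_of_geometric {Ω ι : Type*} [MeasurableSpace Ω] {μ : Measure Ω}
    [Fintype ι] [Nonempty ι] {X : ι → Ω → ℕ} (hX : ∀ i, Measurable (X i))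
    (hindep : iIndepFun X μ)
    {p : ι → ℝ} (hp1 : ∀ i, p i ≤ 1) (hpos : ∀ i, ∀ᵐ ω ∂μ, 1 ≤ X i ω)
    (hlaw : ∀ i, ∀ j : ℕ, 1 ≤ j → μ.real {ω | X i ω = j} = p i * (1 - p i) ^ (j - 1))
    {q u : ℝ} (hq : ∀ i, q ≤ p i) (hq0 : 0 < q) (hu0 : 0 ≤ u) (huq : u < q)
    {a : ℝ} (ha : 0 ≤ a) :
    μ.real {ω | a ≤ ∑ i, (X i ω : ℝ)} ≤
      Real.exp (-u * a + (∑ i, q / p i) * -Real.log (1 - u / q)) := by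
  have := hindep.isProbabilityMeasure
  have hgeo i := mgf_geometric_neg_log_one_sub (hX i) (hq0.trans_le (hq i)) (hp1 i) (hpos i)
    (hlaw i) (huq.trans_le (hq i))
  have hu1 : 0 < 1 - u := by linarith [hq (Classical.arbitrary ι), hp1 (Classical.arbitrary ι)]
  have hut : u ≤ -Real.log (1 - u) := by linarith [Real.log_le_sub_one_of_pos hu1]
  have hfactor i : mgf (fun ω => (X i ω : ℝ)) μ (-Real.log (1 - u)) ≤
      Real.exp (q / p i * -Real.log (1 - u / q)) := by
    have hp : 0 < p i := hq0.trans_le (hq i)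
    have hup : 0 < 1 - u / p i := by rw [sub_pos, div_lt_one hp]; exact huq.trans_le (hq i)
    rw [(hgeo i).2, ← Real.exp_log (inv_pos.2 hup), Real.exp_le_exp, Real.log_inv, mul_neg,
      neg_le_neg_iff]
    exact mul_log_one_sub_div_le_log_one_sub_div hq0 (hq i) huq
  calc μ.real {ω | a ≤ ∑ i, (X i ω : ℝ)}
      ≤ Real.exp (-(-Real.log (1 - u)) * a) *
          ∏ i, mgf (fun ω => (X i ω : ℝ)) μ (-Real.log (1 - u)) :=
        measure_sum_ge_le_exp_mul_prod_mgf (hindep.comp _ fun _ => measurable_from_top)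
          (fun i => measurable_from_top.comp (hX i)) (hu0.trans hut) (fun i => (hgeo i).1) a
    _ ≤ Real.exp (-u * a) * ∏ i, Real.exp (q / p i * -Real.log (1 - u / q)) :=
        mul_le_mul (Real.exp_le_exp.2 (by nlinarith))
          (Finset.prod_le_prod (fun _ _ => mgf_nonneg) fun i _ => hfactor i)
          (Finset.prod_nonneg fun _ _ => mgf_nonneg) (Real.exp_pos _).le
    _ = Real.exp (-u * a + (∑ i, q / p i) * -Real.log (1 - u / q)) := by
        rw [← Real.exp_sum, ← Real.exp_add, Finset.sum_mul]

theorem stmt12_general {n : ℕ} [NeZero n] {Ω : Type*} [MeasureSpace Ω]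
    (X : Fin n → Ω → ℕ) (hXmeas : ∀ i, Measurable (X i))
    (p : Fin n → ℝ) (hp0 : ∀ i, 0 < p i) (hp1 : ∀ i, p i ≤ 1)
    (hindep : iIndepFun X ℙ)
    (hpos : ∀ i, ∀ᵐ ω ∂ℙ, 1 ≤ X i ω)
    (hdist : ∀ i, ∀ j : ℕ, 1 ≤ j →
      (ℙ {ω | X i ω = j}).toReal = p i * (1 - p i) ^ (j - 1))
    (μ pstar lam : ℝ)
    (hμ : μ = ∑ i, 1 / p i)
    (hpstar : pstar = Finset.univ.inf' Finset.univ_nonempty p)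
    (hlam : 1 ≤ lam) :
    (ℙ {ω | lam * μ ≤ ∑ i, (X i ω : ℝ)}).toReal
      ≤ Real.exp (-(pstar * μ * (lam - 1 - Real.log lam))) := by
  have hps_le i : pstar ≤ p i := hpstar ▸ Finset.inf'_le _ (Finset.mem_univ i)
  have hps_pos : 0 < pstar := hpstar ▸ (Finset.lt_inf'_iff _).2 fun i _ => hp0 i
  have hlam0 : 0 < lam := one_pos.trans_le hlam
  have hμ0 : 0 ≤ μ := hμ ▸ Finset.sum_nonneg fun i _ => (one_div_pos.2 (hp0 i)).le
  have hu0 : 0 ≤ pstar * (1 - lam⁻¹) :=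
    mul_nonneg hps_pos.le (sub_nonneg.2 (inv_le_one_of_one_le₀ hlam))
  have hu : pstar * (1 - lam⁻¹) < pstar :=
    mul_lt_of_lt_one_right hps_pos (sub_lt_self _ (inv_pos.2 hlam0))
  have hsum : ∑ i, pstar / p i = pstar * μ := by simp only [hμ, Finset.mul_sum, mul_one_div]
  have hlog : -Real.log (1 - pstar * (1 - lam⁻¹) / pstar) = Real.log lam := by
    rw [mul_div_cancel_left₀ _ hps_pos.ne', sub_sub_cancel, Real.log_inv, neg_neg]
  have key := measure_sum_ge_le_of_geometric hXmeas hindep hp1 hpos hdist hps_le hps_pos hu0 hu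
    (mul_nonneg hlam0.le hμ0)
  rw [hsum, hlog] at key
  refine key.trans_eq (congrArg Real.exp ?_)
  field_simp
  ring

/-- tail bound for sums of independent geometric random variables,
Theorem 2.1 of [J18]: let `X₁, …, X_n` be independent geometric random variables
taking values in the positive integers with `Pr{X_i = j} = p_i(1−p_i)^{j−1}`, where
`p_i ∈ (0,1]`. Let `X := Σ X_i`, `μ := E[X] = Σ 1/p_i`, and `p_* := min_i p_i`. Then
for every `λ ≥ 1`: `Pr{X ≥ λμ} ≤ exp(−p_*·μ·(λ − 1 − ln λ))`. -/
theorem stmt12 {n : ℕ} [NeZero n] {Ω : Type*} [MeasureSpace Ω]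
    [IsProbabilityMeasure (ℙ : Measure Ω)]
    (X : Fin n → Ω → ℕ) (hXmeas : ∀ i, Measurable (X i))
    (p : Fin n → ℝ) (hp0 : ∀ i, 0 < p i) (hp1 : ∀ i, p i ≤ 1)
    (hindep : iIndepFun X ℙ)
    (hpos : ∀ i, ∀ᵐ ω ∂ℙ, 1 ≤ X i ω)
    (hdist : ∀ i, ∀ j : ℕ, 1 ≤ j →
      (ℙ {ω | X i ω = j}).toReal = p i * (1 - p i) ^ (j - 1))
    (μ pstar lam : ℝ)
    (hμ : μ = ∑ i, 1 / p i)
    (hpstar : pstar = Finset.univ.inf' Finset.univ_nonempty p)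
    (hlam : 1 ≤ lam) :
    (ℙ {ω | lam * μ ≤ ∑ i, (X i ω : ℝ)}).toReal
      ≤ Real.exp (-(pstar * μ * (lam - 1 - Real.log lam))) :=
  stmt12_general X hXmeas p hp0 hp1 hindep hpos hdist μ pstar lam hμ hpstar hlam
end

section
/- Let m, k, t be positive integers satisfying 2(k + t − 1) ≤ m and 3t(t−1) ≤ m − k (a precise form of the assumption k, t ≪ m). Let X₁, …, X_t be independent geometric random variables with Pr{X_i = j} = p_i(1−p_i)^{j−1} for j ≥ 1, where p_i = 1 − (k+i−1)/m. Then for every δ ∈ (0,1): Pr{ Σ_{i=1}^t X_i ≥ 4t + 4·ln(1/δ) } ≤ δ. (This is the quantitative core of the claim that, sampling uniformly with replacement from {1,…,m}, with probability 1 − δ at most O(t + log(1/δ)) draws suffice to collect t elements outside a fixed set of size k.) -/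
open MeasureTheory ProbabilityTheory Real
open scoped ENNReal

/-! Chernoff bound at `λ = log (4/3)`. Every parameter `c_i = (k + i - 1)/m` is at most `1/2`,
so the moment generating function of `X_i` at `λ`, namely `(4/3)(1 - c_i)/(1 - (4/3) c_i)`,
is at most `2`. By independence `Pr{Σ X_i ≥ a} ≤ (3/4)^a 2^t`, and for `a = 4t + 4 ln(1/δ)` this
is at most `δ` because `(4/3)^4 = 256/81` exceeds both `2` and `e`. -/

section Geometric

variable {Ω : Type*} [MeasurableSpace Ω] {μ : Measure Ω} {X : Ω → ℕ} {c r : ℝ}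

theorem lintegral_comp_nat_eq_tsum (hX : Measurable X) (f : ℕ → ℝ≥0∞) :
    ∫⁻ ω, f (X ω) ∂μ = ∑' n, f n * μ {ω | X ω = n} := by
  rw [← lintegral_map (measurable_of_countable f) hX, lintegral_countable']
  simp_rw [Measure.map_apply hX (measurableSet_singleton _)]
  rfl

theorem one_sub_nonneg_of_geometric
    (hdist : ∀ n : ℕ, μ.real {ω | X ω = n + 1} = (1 - c) * c ^ n) : 0 ≤ 1 - c := by
  simpa using (hdist 0).symm.trans_ge measureReal_nonneg

theorem lintegral_pow_of_geometric [IsFiniteMeasure μ] (hX : Measurable X)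
    (hpos : ∀ᵐ ω ∂μ, 1 ≤ X ω) (hdist : ∀ n : ℕ, μ.real {ω | X ω = n + 1} = (1 - c) * c ^ n)
    (hc : 0 ≤ c) (hr : 0 ≤ r) (hrc : r * c < 1) :
    ∫⁻ ω, ENNReal.ofReal (r ^ X ω) ∂μ = ENNReal.ofReal (r * (1 - c) / (1 - r * c)) := by
  have hzero : μ {ω | X ω = 0} = 0 :=
    measure_mono_null (fun ω (hω : X ω = 0) => by simp [hω]) (ae_iff.mp hpos)
  have hc1 := one_sub_nonneg_of_geometric hdist
  have hterm : ∀ n : ℕ, ENNReal.ofReal (r ^ (n + 1)) * μ {ω | X ω = n + 1}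
      = ENNReal.ofReal (r * (1 - c) * (r * c) ^ n) := by
    intro n
    rw [← ofReal_measureReal, hdist, ← ENNReal.ofReal_mul (by positivity)]
    ring_nf
  have hrc0 : 0 ≤ r * c := by positivity
  rw [lintegral_comp_nat_eq_tsum hX (fun n => ENNReal.ofReal (r ^ n)),
    tsum_eq_zero_add' ENNReal.summable, hzero, mul_zero, zero_add, tsum_congr hterm,
    ← ENNReal.ofReal_tsum_of_nonneg (fun n => by positivity)
      ((summable_geometric_of_lt_one hrc0 hrc).mul_left _), tsum_mul_left,
    tsum_geometric_of_lt_one hrc0 hrc, div_eq_mul_inv]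

theorem exp_log_mul_natCast (hr : 0 < r) (n : ℕ) : exp (log r * n) = r ^ n := by
  rw [← rpow_def_of_pos hr, rpow_natCast]

theorem integrable_exp_mul_of_geometric [IsFiniteMeasure μ] (hX : Measurable X)
    (hpos : ∀ᵐ ω ∂μ, 1 ≤ X ω) (hdist : ∀ n : ℕ, μ.real {ω | X ω = n + 1} = (1 - c) * c ^ n)
    (hc : 0 ≤ c) (hr : 0 < r) (hrc : r * c < 1) :
    Integrable (fun ω => exp (log r * X ω)) μ := by
  refine ⟨by fun_prop, ?_⟩
  rw [hasFiniteIntegral_iff_ofReal (ae_of_all _ fun ω => (exp_pos _).le)]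
  simp_rw [exp_log_mul_natCast hr, lintegral_pow_of_geometric hX hpos hdist hc hr.le hrc]
  exact ENNReal.ofReal_lt_top

theorem mgf_of_geometric [IsFiniteMeasure μ] (hX : Measurable X)
    (hpos : ∀ᵐ ω ∂μ, 1 ≤ X ω) (hdist : ∀ n : ℕ, μ.real {ω | X ω = n + 1} = (1 - c) * c ^ n)
    (hc : 0 ≤ c) (hr : 0 < r) (hrc : r * c < 1) :
    mgf (fun ω => (X ω : ℝ)) μ (log r) = r * (1 - c) / (1 - r * c) := by
  have hc1 := one_sub_nonneg_of_geometric hdist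
  rw [mgf, integral_eq_lintegral_of_nonneg_ae (ae_of_all _ fun ω => (exp_pos _).le)
    (by fun_prop)]
  simp_rw [exp_log_mul_natCast hr, lintegral_pow_of_geometric hX hpos hdist hc hr.le hrc]
  exact ENNReal.toReal_ofReal (div_nonneg (by positivity) (by linarith))

theorem mgf_log_four_thirds_le_two_of_geometric [IsFiniteMeasure μ] (hX : Measurable X)
    (hpos : ∀ᵐ ω ∂μ, 1 ≤ X ω) (hdist : ∀ n : ℕ, μ.real {ω | X ω = n + 1} = (1 - c) * c ^ n)
    (hc : 0 ≤ c) (hc2 : c ≤ 1 / 2) :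
    mgf (fun ω => (X ω : ℝ)) μ (log (4 / 3)) ≤ 2 := by
  rw [mgf_of_geometric hX hpos hdist hc (by norm_num) (by linarith), div_le_iff₀ (by linarith)]
  linarith

end Geometric

theorem ProbabilityTheory.iIndepFun.measureReal_sum_ge_le {Ω ι : Type*} [MeasurableSpace Ω]
    {μ : Measure Ω} [Fintype ι] {Y : ι → Ω → ℝ} (hindep : iIndepFun Y μ)
    (hmeas : ∀ i, Measurable (Y i))
    {l M : ℝ} (hl : 0 ≤ l) (hint : ∀ i, Integrable (fun ω => exp (l * Y i ω)) μ)
    (hM : ∀ i, mgf (Y i) μ l ≤ M) (a : ℝ) :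
    μ.real {ω | a ≤ ∑ i, Y i ω} ≤ exp (-l * a) * M ^ Fintype.card ι := by
  have := hindep.isProbabilityMeasure
  have hchernoff := measure_ge_le_exp_mul_mgf (X := ∑ i, Y i) a hl
    (hindep.integrable_exp_mul_sum hmeas (s := Finset.univ) fun i _ => hint i)
  rw [hindep.mgf_sum hmeas] at hchernoff
  simp only [Finset.sum_apply] at hchernoff
  refine hchernoff.trans (mul_le_mul_of_nonneg_left ?_ (exp_pos _).le)
  simpa using Finset.prod_le_prod (fun i _ => mgf_nonneg) fun i (_ : i ∈ Finset.univ) => hM i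

theorem one_le_four_mul_log_four_thirds : 1 ≤ 4 * log (4 / 3) := by
  rw [← log_rpow (by norm_num), le_log_iff_exp_le (by positivity)]
  calc exp 1 ≤ 2.7182818286 := exp_one_lt_d9.le
    _ ≤ (4 / 3) ^ (4 : ℝ) := by norm_num

theorem log_two_le_four_mul_log_four_thirds : log 2 ≤ 4 * log (4 / 3) := by
  rw [← log_rpow (by norm_num)]
  exact log_le_log (by norm_num) (by norm_num)

theorem exp_neg_log_four_thirds_mul_le {δ : ℝ} (hδ0 : 0 < δ) (hδ1 : δ < 1) (t : ℕ) :
    exp (-log (4 / 3) * (4 * t + 4 * log (1 / δ))) * 2 ^ t ≤ δ := by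
  have hL : 0 ≤ log (1 / δ) := log_nonneg (by rw [le_one_div one_pos hδ0]; linarith)
  have h1 := one_le_four_mul_log_four_thirds
  have h2 := log_two_le_four_mul_log_four_thirds
  calc exp (-log (4 / 3) * (4 * t + 4 * log (1 / δ))) * 2 ^ t
      = exp (-log (4 / 3) * (4 * t + 4 * log (1 / δ)) + t * log 2) := by
        rw [exp_add, exp_nat_mul, exp_log two_pos]
    _ ≤ exp (-log (1 / δ)) := by
        gcongr
        nlinarith [mul_le_mul_of_nonneg_left h2 t.cast_nonneg]
    _ = δ := by rw [one_div, log_inv, neg_neg, exp_log hδ0]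

theorem stmt13_general {m k t : ℕ} (h1 : 2 * (k + t - 1) ≤ m)
    {Ω : Type*} [MeasureSpace Ω]
    (X : Fin t → Ω → ℕ) (hXmeas : ∀ i, Measurable (X i))
    (hindep : iIndepFun X ℙ)
    (hpos : ∀ i, ∀ᵐ ω ∂ℙ, 1 ≤ X i ω)
    (hdist : ∀ i : Fin t, ∀ j : ℕ, 1 ≤ j →
      (ℙ {ω | X i ω = j}).toReal
        = (1 - ((k + (i : ℕ) : ℕ) : ℝ) / m) * (((k + (i : ℕ) : ℕ) : ℝ) / m) ^ (j - 1))
    (δ : ℝ) (hδ0 : 0 < δ) (hδ1 : δ < 1) :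
    (ℙ {ω | 4 * (t : ℝ) + 4 * Real.log (1 / δ) ≤ ∑ i, (X i ω : ℝ)}).toReal ≤ δ := by
  have := hindep.isProbabilityMeasure
  have hc : ∀ i : Fin t, ((k + (i : ℕ) : ℕ) : ℝ) / m ≤ 1 / 2 := fun i => by
    have : ((2 * (k + (i : ℕ)) : ℕ) : ℝ) ≤ m := by exact_mod_cast (by omega)
    push_cast at this
    exact div_le_of_le_mul₀ m.cast_nonneg one_half_pos.le (by push_cast; linarith)
  have hgeom : ∀ i : Fin t, ∀ n : ℕ, (ℙ : Measure Ω).real {ω | X i ω = n + 1}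
      = (1 - ((k + (i : ℕ) : ℕ) : ℝ) / m) * (((k + (i : ℕ) : ℕ) : ℝ) / m) ^ n := fun i n => by
    simpa [measureReal_def] using hdist i (n + 1) (by omega)
  have hchernoff := (hindep.comp (fun _ => (Nat.cast : ℕ → ℝ)) fun _ => measurable_from_top)
    |>.measureReal_sum_ge_le (fun i => measurable_from_top.comp (hXmeas i))
      (log_nonneg (by norm_num))
      (fun i => integrable_exp_mul_of_geometric (hXmeas i) (hpos i) (hgeom i) (by positivity)
        (by norm_num) (by linarith [hc i]))
      (fun i => mgf_log_four_thirds_le_two_of_geometric (hXmeas i) (hpos i) (hgeom i)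
        (by positivity) (hc i)) (4 * t + 4 * log (1 / δ))
  rw [Fintype.card_fin] at hchernoff
  simpa [measureReal_def] using hchernoff.trans (exp_neg_log_four_thirds_mul_le hδ0 hδ1 t)

/-- quantitative core of Lemma on collecting `t` new elements by
uniform sampling: let `m, k, t` be positive integers with `2(k + t − 1) ≤ m` and
`3t(t−1) ≤ m − k`. Let `X₁, …, X_t` be independent geometric random variables where
`X_i` (1-based index `i`, modeled by `i : Fin t` with 1-based index `i+1`) has
parameter `p_i = 1 − (k + i − 1)/m`, i.e.
`Pr{X_i = j} = (1 − (k+i−1)/m)·((k+i−1)/m)^{j−1}` for `j ≥ 1`. Then for every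
`δ ∈ (0,1)`: `Pr{Σ X_i ≥ 4t + 4·ln(1/δ)} ≤ δ`. -/
theorem stmt13 {m k t : ℕ} (hm : 0 < m) (hk : 0 < k) (ht : 0 < t)
    (h1 : 2 * (k + t - 1) ≤ m) (h2 : 3 * t * (t - 1) ≤ m - k)
    {Ω : Type*} [MeasureSpace Ω] [IsProbabilityMeasure (ℙ : Measure Ω)]
    (X : Fin t → Ω → ℕ) (hXmeas : ∀ i, Measurable (X i))
    (hindep : iIndepFun X ℙ)
    (hpos : ∀ i, ∀ᵐ ω ∂ℙ, 1 ≤ X i ω)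
    (hdist : ∀ i : Fin t, ∀ j : ℕ, 1 ≤ j →
      (ℙ {ω | X i ω = j}).toReal
        = (1 - ((k + (i : ℕ) : ℕ) : ℝ) / m) * (((k + (i : ℕ) : ℕ) : ℝ) / m) ^ (j - 1))
    (δ : ℝ) (hδ0 : 0 < δ) (hδ1 : δ < 1) :
    (ℙ {ω | 4 * (t : ℝ) + 4 * Real.log (1 / δ) ≤ ∑ i, (X i ω : ℝ)}).toReal ≤ δ :=
  stmt13_general h1 X hXmeas hindep hpos hdist δ hδ0 hδ1
end

section
/- Let P₁, …, P_N be real symmetric idempotent n×n matrices (orthogonal projection matrices), let p₁, …, p_N ≥ 0 with Σ_i p_i = 1, and set M := Σ_i p_i P_i. Assume M ≠ 0 and let μ denote the smallest nonzero eigenvalue of the symmetric positive semidefinite matrix M. Then for every vector v ∈ ℝⁿ orthogonal to the kernel of M: Σ_{i=1}^N p_i · ‖v − P_i v‖² ≤ (1 − μ) · ‖v‖². (This is the one-step contraction E‖(I − P_S)v‖² ≤ (1 − λ_min⁺(E[P_S]))·‖v‖² of sketch-and-project.) -/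
/-!
Since each `P i` is a symmetric idempotent, `‖v - P i v‖² = ‖v‖² - ⟪v, P i v⟫`, so the weighted
sum equals `‖v‖² - ⟪v, M v⟫`. Expanding `v` in an orthonormal eigenbasis of the positive
semidefinite matrix `M`, the coefficients along the kernel vanish and every other eigenvalue is
at least `μ`, whence `⟪v, M v⟫ ≥ μ ‖v‖²`.
-/

open Matrix

namespace Matrix

variable {ι : Type*} [Fintype ι]

lemma posSemidef_of_transpose_eq_of_isIdempotentElem {P : Matrix ι ι ℝ} (hsymm : Pᵀ = P)
    (hidem : IsIdempotentElem P) : P.PosSemidef := by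
  simpa only [conjTranspose_eq_transpose_of_trivial, hsymm, hidem.eq]
    using posSemidef_conjTranspose_mul_self P

lemma sub_mulVec_dotProduct_self_of_transpose_eq_of_isIdempotentElem {P : Matrix ι ι ℝ}
    (hsymm : Pᵀ = P) (hidem : IsIdempotentElem P) (v : ι → ℝ) :
    (v - P *ᵥ v) ⬝ᵥ (v - P *ᵥ v) = v ⬝ᵥ v - v ⬝ᵥ (P *ᵥ v) := by
  have hPP : (P *ᵥ v) ⬝ᵥ (P *ᵥ v) = v ⬝ᵥ (P *ᵥ v) := by
    rw [dotProduct_mulVec, ← mulVec_transpose, hsymm, mulVec_mulVec, hidem, dotProduct_comm]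
  rw [sub_dotProduct, dotProduct_sub, dotProduct_sub, hPP, dotProduct_comm (P *ᵥ v) v]
  ring

lemma dotProduct_sum_smul_mulVec {N : Type*} [Fintype N] (p : N → ℝ) (P : N → Matrix ι ι ℝ)
    (v : ι → ℝ) : v ⬝ᵥ ((∑ i, p i • P i) *ᵥ v) = ∑ i, p i * (v ⬝ᵥ (P i *ᵥ v)) := by
  simp only [sum_mulVec, dotProduct_sum, smul_mulVec, dotProduct_smul, smul_eq_mul]

variable [DecidableEq ι]

lemma IsHermitian.dotProduct_eq_sum_eigenvectorBasis {A : Matrix ι ι ℝ} (hA : A.IsHermitian)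
    (u v : ι → ℝ) : u ⬝ᵥ v = ∑ j, (u ⬝ᵥ hA.eigenvectorBasis j) * (hA.eigenvectorBasis j ⬝ᵥ v) := by
  simpa [EuclideanSpace.inner_eq_star_dotProduct, dotProduct_comm, mul_comm]
    using (hA.eigenvectorBasis.sum_inner_mul_inner (WithLp.toLp 2 u) (WithLp.toLp 2 v)).symm

lemma IsHermitian.hasEigenvalue_toLin'_eigenvalues {A : Matrix ι ι ℝ} (hA : A.IsHermitian)
    (j : ι) : Module.End.HasEigenvalue (toLin' A) (hA.eigenvalues j) :=
  .of_mem_spectrum <| (spectrum_toLin' A).symm ▸ hA.eigenvalues_mem_spectrum_real j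

lemma PosSemidef.mul_dotProduct_self_le_dotProduct_mulVec {A : Matrix ι ι ℝ} (hA : A.PosSemidef)
    {μ : ℝ} (hμ : ∀ c : ℝ, Module.End.HasEigenvalue (toLin' A) c → 0 < c → μ ≤ c)
    {v : ι → ℝ} (hv : ∀ w : ι → ℝ, A *ᵥ w = 0 → v ⬝ᵥ w = 0) :
    μ * (v ⬝ᵥ v) ≤ v ⬝ᵥ (A *ᵥ v) := by
  have hH := hA.isHermitian
  have hcoeff (j : ι) : hH.eigenvectorBasis j ⬝ᵥ (A *ᵥ v) =
      hH.eigenvalues j * (hH.eigenvectorBasis j ⬝ᵥ v) := by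
    rw [dotProduct_mulVec, ← mulVec_transpose, ← conjTranspose_eq_transpose_of_trivial, hH.eq,
      hH.mulVec_eigenvectorBasis, smul_dotProduct, smul_eq_mul]
  rw [hH.dotProduct_eq_sum_eigenvectorBasis v v,
    hH.dotProduct_eq_sum_eigenvectorBasis v (A *ᵥ v), Finset.mul_sum]
  refine Finset.sum_le_sum fun j _ ↦ ?_
  rw [hcoeff, dotProduct_comm v]
  rcases (hA.eigenvalues_nonneg j).eq_or_lt with hzero | hpos
  · have hker : A *ᵥ hH.eigenvectorBasis j = 0 := by
      rw [hH.mulVec_eigenvectorBasis, ← hzero, zero_smul]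
    simp [dotProduct_comm _ v, hv _ hker]
  · have := hμ _ (hH.hasEigenvalue_toLin'_eigenvalues j) hpos
    nlinarith [mul_self_nonneg (hH.eigenvectorBasis j ⬝ᵥ v)]

end Matrix

theorem stmt14_general {n N : ℕ} (P : Fin N → Matrix (Fin n) (Fin n) ℝ)
    (hsymm : ∀ i, (P i)ᵀ = P i) (hidem : ∀ i, P i * P i = P i)
    (p : Fin N → ℝ) (hp : ∀ i, 0 ≤ p i) (hsum : ∑ i, p i = 1)
    (M : Matrix (Fin n) (Fin n) ℝ) (hM : M = ∑ i, p i • P i)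
    (μ : ℝ)
    (hμmin : ∀ c : ℝ, Module.End.HasEigenvalue (Matrix.toLin' M) c → 0 < c → μ ≤ c)
    (v : Fin n → ℝ) (hv : ∀ w : Fin n → ℝ, M *ᵥ w = 0 → v ⬝ᵥ w = 0) :
    ∑ i, p i * ((v - P i *ᵥ v) ⬝ᵥ (v - P i *ᵥ v)) ≤ (1 - μ) * (v ⬝ᵥ v) := by
  have hMpsd : M.PosSemidef := hM ▸ posSemidef_sum _ fun i _ ↦
    (posSemidef_of_transpose_eq_of_isIdempotentElem (hsymm i) (hidem i)).smul (hp i)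
  have hrayleigh := hMpsd.mul_dotProduct_self_le_dotProduct_mulVec hμmin hv
  have hmean : ∑ i, p i * ((v - P i *ᵥ v) ⬝ᵥ (v - P i *ᵥ v)) = v ⬝ᵥ v - v ⬝ᵥ (M *ᵥ v) := by
    simp only [sub_mulVec_dotProduct_self_of_transpose_eq_of_isIdempotentElem (hsymm _) (hidem _),
      mul_sub, Finset.sum_sub_distrib, ← Finset.sum_mul, hsum, one_mul, hM,
      dotProduct_sum_smul_mulVec]
  rw [hmean]
  linarith

/-- one-step contraction of sketch-and-project: let
`P₁, …, P_N` be real symmetric idempotent `n × n` matrices (orthogonal projections),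
`p₁, …, p_N ≥ 0` with `Σ p_i = 1`, and `M := Σ p_i P_i ≠ 0`. If `μ` is the smallest
nonzero eigenvalue of the symmetric psd matrix `M`, then every `v` orthogonal to the
kernel of `M` satisfies `Σ_i p_i ‖v − P_i v‖² ≤ (1 − μ)·‖v‖²`. -/
theorem stmt14 {n N : ℕ} (P : Fin N → Matrix (Fin n) (Fin n) ℝ)
    (hsymm : ∀ i, (P i)ᵀ = P i) (hidem : ∀ i, P i * P i = P i)
    (p : Fin N → ℝ) (hp : ∀ i, 0 ≤ p i) (hsum : ∑ i, p i = 1)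
    (M : Matrix (Fin n) (Fin n) ℝ) (hM : M = ∑ i, p i • P i) (hM0 : M ≠ 0)
    (μ : ℝ)
    (hμeig : Module.End.HasEigenvalue (Matrix.toLin' M) μ) (hμpos : 0 < μ)
    (hμmin : ∀ c : ℝ, Module.End.HasEigenvalue (Matrix.toLin' M) c → 0 < c → μ ≤ c)
    (v : Fin n → ℝ) (hv : ∀ w : Fin n → ℝ, M *ᵥ w = 0 → v ⬝ᵥ w = 0) :
    ∑ i, p i * ((v - P i *ᵥ v) ⬝ᵥ (v - P i *ᵥ v)) ≤ (1 - μ) * (v ⬝ᵥ v) :=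
  stmt14_general P hsymm hidem p hp hsum M hM μ hμmin v hv
end
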